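/- arXiv:1609.02790 — 2 statements merged into one kernel-verified Lean document; each statement's English description precedes it below -/
import Mathlib

section
/- Let P be a labeled poset on [p] and s : [p] → ℤ₊. Then, as formal power series in t with coefficients in the polynomial ring in x₁,…,x_p, y₁,…,y_p, one has ∑_{n≥0} F⁺_{(P,s)}(x,y;n) t^n = ∑_{τ=(π,r) ∈ L(P,s)} y^r · (∏_{i ∈ D₄(τ)} x_{π_{i+1}} ⋯ x_{π_p}) · t^{|D₄(τ)|} · (1−t)^{−1} · ∏_{i ∈ [p]} (1 − x_{π_i} ⋯ x_{π_p} t)^{−1}, where for i = 0 the product x_{π_{i+1}} ⋯ x_{π_p} is x_{π_1} ⋯ x_{π_p} and for i = p it is 1. -/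
open scoped Classical

noncomputable section

/-- `f : Fin p → ℕ` is a lecture hall `(P,s)`-partition: labels are compared via the
usual order on `Fin p`. -/
def IsLHPart {p : ℕ} (P : PartialOrder (Fin p)) (s : Fin p → ℕ) (f : Fin p → ℕ) : Prop :=
  (∀ x y, P.lt x y → (f x : ℚ) / (s x : ℚ) ≤ (f y : ℚ) / (s y : ℚ)) ∧
  ∀ x y, P.lt x y → y < x → (f x : ℚ) / (s x : ℚ) < (f y : ℚ) / (s y : ℚ)

/-- The set of linear extensions (Jordan–Hölder set) of a labeled poset. -/
def LinExt {p : ℕ} (P : PartialOrder (Fin p)) : Set (Equiv.Perm (Fin p)) :=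
  {π | ∀ i j, P.le (π i) (π j) → i ≤ j}

/-- The set `L(P,s)` of `s`-colored permutations `(π, r)` with `π ∈ L(P)`. -/
def LPs {p : ℕ} (P : PartialOrder (Fin p)) (s : Fin p → ℕ) :
    Finset (Equiv.Perm (Fin p) × (∀ x : Fin p, Fin (s x))) :=
  Finset.univ.filter fun τ => τ.1 ∈ LinExt P

/-- Descent of `τ = (π,r)` at (1-based) position `i`. -/
def IsDesc {p : ℕ} (s : Fin p → ℕ) (π : Equiv.Perm (Fin p)) (r : Fin p → ℕ) (i : ℕ) : Prop :=
  ∃ (h1 : i - 1 < p) (h2 : i < p),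
    ((π ⟨i - 1, h1⟩ < π ⟨i, h2⟩ ∧
      (r (π ⟨i - 1, h1⟩) : ℚ) / (s (π ⟨i - 1, h1⟩) : ℚ) >
        (r (π ⟨i, h2⟩) : ℚ) / (s (π ⟨i, h2⟩) : ℚ)) ∨
    (π ⟨i, h2⟩ < π ⟨i - 1, h1⟩ ∧
      (r (π ⟨i - 1, h1⟩) : ℚ) / (s (π ⟨i - 1, h1⟩) : ℚ) ≥
        (r (π ⟨i, h2⟩) : ℚ) / (s (π ⟨i, h2⟩) : ℚ)))

/-- The descent set `D₁(τ) ⊆ [p-1]`. -/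
def D1 {p : ℕ} (s : Fin p → ℕ) (π : Equiv.Perm (Fin p)) (r : Fin p → ℕ) : Finset ℕ :=
  (Finset.Icc 1 (p - 1)).filter (IsDesc s π r)

/-- The descent set `D₃(τ)`: descents of `(π, r + 1)` (i.e. using `(r(x)+1)/s(x)`). -/
def D3 {p : ℕ} (s : Fin p → ℕ) (π : Equiv.Perm (Fin p)) (r : Fin p → ℕ) : Finset ℕ :=
  D1 s π fun x => r x + 1

/-- `D₂(τ) = D₁(τ) ∪ {0}` if `r(π₁) = 0`, else `D₁(τ)`. -/
def D2 {p : ℕ} (hp : 0 < p) (s : Fin p → ℕ) (π : Equiv.Perm (Fin p)) (r : Fin p → ℕ) :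
    Finset ℕ :=
  if r (π ⟨0, hp⟩) = 0 then insert 0 (D1 s π r) else D1 s π r

/-- `D(τ) = D₁(τ) ∪ {p}` if `r(π_p) > 0`, else `D₁(τ)`. -/
def Dfull {p : ℕ} (hp : 0 < p) (s : Fin p → ℕ) (π : Equiv.Perm (Fin p)) (r : Fin p → ℕ) :
    Finset ℕ :=
  if r (π ⟨p - 1, Nat.sub_lt hp Nat.one_pos⟩) = 0 then D1 s π r else insert p (D1 s π r)

/-- `D₄(τ) = D₂(τ) ∪ {p}` if `r(π_p) > 0`, else `D₂(τ)`. -/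
def D4 {p : ℕ} (hp : 0 < p) (s : Fin p → ℕ) (π : Equiv.Perm (Fin p)) (r : Fin p → ℕ) :
    Finset ℕ :=
  if r (π ⟨p - 1, Nat.sub_lt hp Nat.one_pos⟩) = 0 then D2 hp s π r
  else insert p (D2 hp s π r)

/-- Variables: `Sum.inl (Sum.inl x)` is `x_x`, `Sum.inl (Sum.inr x)` is `y_x`, and
`Sum.inr ()` is `t`. -/
abbrev XYT (p : ℕ) := (Fin p ⊕ Fin p) ⊕ Unit

/-- The variable `t`. -/
def tvar (p : ℕ) : MvPowerSeries (XYT p) ℚ := MvPowerSeries.X (Sum.inr ())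

/-- `x_{π_{i+1}} ⋯ x_{π_p}`; here `i` is the number of leading positions omitted, so
`i = 0` gives `x_{π_1} ⋯ x_{π_p}` and `i = p` gives the empty product `1`. -/
def xprod {p : ℕ} (π : Equiv.Perm (Fin p)) (i : ℕ) : MvPowerSeries (XYT p) ℚ :=
  ∏ j ∈ Finset.univ.filter fun j : Fin p => i ≤ (j : ℕ),
    MvPowerSeries.X (Sum.inl (Sum.inl (π j)))

/-- The monomial `y^r`. -/
def yprod {p : ℕ} (r : Fin p → ℕ) : MvPowerSeries (XYT p) ℚ :=
  ∏ x : Fin p, MvPowerSeries.X (σ := XYT p) (Sum.inl (Sum.inr x)) ^ r x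

namespace LH

open MvPowerSeries Finsupp

variable {p : ℕ}

/-- exponent of `t` -/
def etv (p : ℕ) : XYT p →₀ ℕ := Finsupp.single (Sum.inr ()) 1

/-- exponent of `y^r` -/
def eyv (r : Fin p → ℕ) : XYT p →₀ ℕ :=
  ∑ x : Fin p, Finsupp.single (Sum.inl (Sum.inr x)) (r x)

/-- exponent of `xprod π i` -/
def exI (π : Equiv.Perm (Fin p)) (i : ℕ) : XYT p →₀ ℕ :=
  ∑ j ∈ Finset.univ.filter fun j : Fin p => i ≤ (j : ℕ),
    Finsupp.single (Sum.inl (Sum.inl (π j))) 1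

@[simp] lemma etv_t : etv p (Sum.inr ()) = 1 := by simp [etv]
@[simp] lemma etv_x (z : Fin p) : etv p (Sum.inl (Sum.inl z)) = 0 := by simp [etv]
@[simp] lemma etv_y (z : Fin p) : etv p (Sum.inl (Sum.inr z)) = 0 := by simp [etv]

@[simp] lemma eyv_y (r : Fin p → ℕ) (z : Fin p) : eyv r (Sum.inl (Sum.inr z)) = r z := by
  rw [eyv, Finsupp.finset_sum_apply]
  rw [Finset.sum_eq_single z (fun b _ hb => by
    rw [Finsupp.single_apply, if_neg (by simp [hb])]) (by simp)]
  simp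

@[simp] lemma eyv_x (r : Fin p → ℕ) (z : Fin p) : eyv r (Sum.inl (Sum.inl z)) = 0 := by
  rw [eyv, Finsupp.finset_sum_apply]
  exact Finset.sum_eq_zero fun b _ => by simp [Finsupp.single_apply]

@[simp] lemma eyv_t (r : Fin p → ℕ) : eyv r (Sum.inr ()) = 0 := by
  rw [eyv, Finsupp.finset_sum_apply]
  exact Finset.sum_eq_zero fun b _ => by simp [Finsupp.single_apply]

@[simp] lemma exI_x (π : Equiv.Perm (Fin p)) (i : ℕ) (m : Fin p) :
    exI π i (Sum.inl (Sum.inl (π m))) = if i ≤ (m : ℕ) then 1 else 0 := by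
  rw [exI, Finsupp.finset_sum_apply]
  by_cases h : i ≤ (m : ℕ)
  · rw [if_pos h, Finset.sum_eq_single_of_mem m (by simp [h]) (fun b _ hb => by
      rw [Finsupp.single_apply, if_neg (by simp [π.injective.ne hb])])]
    simp
  · rw [if_neg h]
    refine Finset.sum_eq_zero fun b hb => ?_
    simp only [Finset.mem_filter, Finset.mem_univ, true_and] at hb
    rw [Finsupp.single_apply, if_neg]
    intro hc
    exact h (by simpa [π.injective (Sum.inl.inj (Sum.inl.inj hc))] using hb)

@[simp] lemma exI_y (π : Equiv.Perm (Fin p)) (i : ℕ) (z : Fin p) :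
    exI π i (Sum.inl (Sum.inr z)) = 0 := by
  rw [exI, Finsupp.finset_sum_apply]
  exact Finset.sum_eq_zero fun b _ => by simp [Finsupp.single_apply]

@[simp] lemma exI_t (π : Equiv.Perm (Fin p)) (i : ℕ) : exI π i (Sum.inr ()) = 0 := by
  rw [exI, Finsupp.finset_sum_apply]
  exact Finset.sum_eq_zero fun b _ => by simp [Finsupp.single_apply]

lemma tvar_eq : tvar p = MvPowerSeries.monomial (R := ℚ) (etv p) 1 := by
  rw [tvar, MvPowerSeries.X_def]; rfl

lemma prod_monomial {α : Type*} (S : Finset α) (e : α → (XYT p →₀ ℕ)) :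
    (∏ a ∈ S, MvPowerSeries.monomial (R := ℚ) (e a) 1) =
      MvPowerSeries.monomial (R := ℚ) (∑ a ∈ S, e a) 1 := by
  classical
  induction S using Finset.induction_on with
  | empty => simp [MvPowerSeries.monomial_zero_one]
  | insert _ _ h ih =>
    rw [Finset.prod_insert h, Finset.sum_insert h, ih,
      MvPowerSeries.monomial_mul_monomial, one_mul]

lemma xprod_eq (π : Equiv.Perm (Fin p)) (i : ℕ) :
    xprod π i = MvPowerSeries.monomial (R := ℚ) (exI π i) 1 := by
  rw [xprod, exI, ← prod_monomial]
  exact Finset.prod_congr rfl fun j _ => by rw [MvPowerSeries.X_def]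

lemma yprod_eq (r : Fin p → ℕ) :
    yprod r = MvPowerSeries.monomial (R := ℚ) (eyv r) 1 := by
  rw [yprod, eyv, ← prod_monomial]
  refine Finset.prod_congr rfl fun j _ => ?_
  rw [MvPowerSeries.X_pow_eq]

end LH
namespace LH

variable {p : ℕ}

/-- x-coordinate evaluation through `π`. -/
def hX (π : Equiv.Perm (Fin p)) (e : XYT p →₀ ℕ) (m : Fin p) : ℕ :=
  e (Sum.inl (Sum.inl (π m)))

/-- The condition describing the support of
`(1-t)⁻¹ * ∏_{i<j} (1 - xprod π i * t)⁻¹`. -/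
def Cnd (π : Equiv.Perm (Fin p)) (j : ℕ) (e : XYT p →₀ ℕ) : Prop :=
  (∀ z : Fin p, e (Sum.inl (Sum.inr z)) = 0) ∧
  (∀ m1 m2 : Fin p, m1 ≤ m2 → hX π e m1 ≤ hX π e m2) ∧
  (∀ m1 m2 : Fin p, m1 ≤ m2 → j ≤ (m1 : ℕ) + 1 → hX π e m2 ≤ hX π e m1) ∧
  (j = 0 → ∀ m : Fin p, hX π e m = 0) ∧
  (∀ m : Fin p, hX π e m ≤ e (Sum.inr ()))

def Gser (π : Equiv.Perm (Fin p)) (j : ℕ) : MvPowerSeries (XYT p) ℚ :=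
  fun e => if Cnd π j e then 1 else 0

lemma coeff_Gser (π : Equiv.Perm (Fin p)) (j : ℕ) (e : XYT p →₀ ℕ) :
    MvPowerSeries.coeff e (Gser π j) = if Cnd π j e then 1 else 0 := rfl

/-- exponent of `xprod π j * t`. -/
def Eu (π : Equiv.Perm (Fin p)) (j : ℕ) : XYT p →₀ ℕ := exI π j + etv p

@[simp] lemma Eu_x (π : Equiv.Perm (Fin p)) (j : ℕ) (m : Fin p) :
    Eu π j (Sum.inl (Sum.inl (π m))) = if j ≤ (m : ℕ) then 1 else 0 := by
  simp [Eu]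

@[simp] lemma Eu_y (π : Equiv.Perm (Fin p)) (j : ℕ) (z : Fin p) :
    Eu π j (Sum.inl (Sum.inr z)) = 0 := by simp [Eu]

@[simp] lemma Eu_t (π : Equiv.Perm (Fin p)) (j : ℕ) : Eu π j (Sum.inr ()) = 1 := by
  simp [Eu]

lemma le_xyt (π : Equiv.Perm (Fin p)) {u v : XYT p →₀ ℕ}
    (hx : ∀ m : Fin p, u (Sum.inl (Sum.inl (π m))) ≤ v (Sum.inl (Sum.inl (π m))))
    (hy : ∀ z : Fin p, u (Sum.inl (Sum.inr z)) ≤ v (Sum.inl (Sum.inr z)))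
    (ht : u (Sum.inr ()) ≤ v (Sum.inr ())) : u ≤ v := by
  intro c
  rcases c with (z | z) | u'
  · have := hx (π.symm z); simpa using this
  · exact hy z
  · exact ht

lemma Cnd_mono {π : Equiv.Perm (Fin p)} {j : ℕ} {e : XYT p →₀ ℕ} (h : Cnd π j e) :
    Cnd π (j + 1) e := by
  obtain ⟨c1, c2, c3, _, c5⟩ := h
  exact ⟨c1, c2, fun m1 m2 h12 hj => c3 m1 m2 h12 (by omega), by omega, c5⟩

lemma hX_sub (π : Equiv.Perm (Fin p)) (e E : XYT p →₀ ℕ) (m : Fin p) :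
    hX π (e - E) m = hX π e m - hX π E m := by
  simp [hX, Finsupp.tsub_apply]

lemma hX_Eu (π : Equiv.Perm (Fin p)) (j : ℕ) (m : Fin p) :
    hX π (Eu π j) m = if j ≤ (m : ℕ) then 1 else 0 := by
  simp [hX]

lemma sub_t (e E : XYT p →₀ ℕ) : (e - E) (Sum.inr ()) = e (Sum.inr ()) - E (Sum.inr ()) :=
  Finsupp.tsub_apply e E _

lemma sub_y (e E : XYT p →₀ ℕ) (z : Fin p) :
    (e - E) (Sum.inl (Sum.inr z)) = e (Sum.inl (Sum.inr z)) - E (Sum.inl (Sum.inr z)) :=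
  Finsupp.tsub_apply e E _

section Sub
variable {π : Equiv.Perm (Fin p)} {j : ℕ} {e : XYT p →₀ ℕ}

lemma hlex (hle : Eu π j ≤ e) (m : Fin p) :
    (if j ≤ (m : ℕ) then 1 else 0) ≤ hX π e m := by
  have := hle (Sum.inl (Sum.inl (π m)))
  rw [Eu_x] at this
  exact this

lemma hlet (hle : Eu π j ≤ e) : 1 ≤ e (Sum.inr ()) := by
  have := hle (Sum.inr ())
  rwa [Eu_t] at this

lemma hx_eq (hle : Eu π j ≤ e) (m : Fin p) :
    hX π e m = hX π (e - Eu π j) m + (if j ≤ (m : ℕ) then 1 else 0) := by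
  rw [hX_sub, hX_Eu]
  have := hlex hle m
  omega

lemma ht_eq (hle : Eu π j ≤ e) :
    e (Sum.inr ()) = (e - Eu π j) (Sum.inr ()) + 1 := by
  rw [sub_t, Eu_t]
  have := hlet hle
  omega

/-- L2: adding back. -/
lemma Cnd_addback (hle : Eu π j ≤ e) (h : Cnd π (j + 1) (e - Eu π j)) : Cnd π (j + 1) e := by
  obtain ⟨c1, c2, c3, _, c5⟩ := h
  refine ⟨?_, ?_, ?_, by omega, ?_⟩
  · intro z; have := c1 z; rw [sub_y, Eu_y] at this
    have h2 := hle (Sum.inl (Sum.inr z)); rw [Eu_y] at h2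
    omega
  · intro m1 m2 h12
    have hv : (m1 : ℕ) ≤ (m2 : ℕ) := h12
    have := c2 m1 m2 h12
    rw [hx_eq hle m1, hx_eq hle m2]
    by_cases hm1 : j ≤ (m1 : ℕ)
    · rw [if_pos hm1, if_pos (by omega)]; omega
    · by_cases hm2 : j ≤ (m2 : ℕ)
      · rw [if_neg hm1, if_pos hm2]; omega
      · rw [if_neg hm1, if_neg hm2]; omega
  · intro m1 m2 h12 hj1
    have hv : (m1 : ℕ) ≤ (m2 : ℕ) := h12
    have hm1 : j ≤ (m1 : ℕ) := by omega
    have := c3 m1 m2 h12 hj1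
    rw [hx_eq hle m1, hx_eq hle m2, if_pos hm1, if_pos (by omega)]
    omega
  · intro m
    have := c5 m
    rw [hx_eq hle m, ht_eq hle]
    by_cases hm : j ≤ (m : ℕ)
    · rw [if_pos hm]; omega
    · rw [if_neg hm]; omega

/-- L3 -/
lemma Cnd_not_sub (hj : j < p) (hC : Cnd π j e) (hle : Eu π j ≤ e)
    (h : Cnd π (j + 1) (e - Eu π j)) : False := by
  obtain ⟨c1, c2, c3, c4, c5⟩ := hC
  rcases Nat.eq_zero_or_pos j with hj0 | hjpos
  · subst hj0
    have h1 := hlex hle ⟨0, hj⟩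
    have h0 := c4 rfl ⟨0, hj⟩
    rw [h0] at h1
    simp at h1
  · have hj1 : j - 1 < p := by omega
    have hle12 : (⟨j - 1, hj1⟩ : Fin p) ≤ ⟨j, hj⟩ := by
      rw [Fin.mk_le_mk]; omega
    have h1 : hX π e ⟨j, hj⟩ ≤ hX π e ⟨j - 1, hj1⟩ :=
      c3 _ _ hle12 (by simp only [Fin.val_mk]; omega)
    have h2 : hX π e ⟨j - 1, hj1⟩ ≤ hX π e ⟨j, hj⟩ := c2 _ _ hle12
    have h3 : 1 ≤ hX π e ⟨j, hj⟩ := by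
      have := hlex hle ⟨j, hj⟩
      simp only [Fin.val_mk] at this
      rwa [if_pos le_rfl] at this
    have h4 := h.2.1 _ _ hle12
    rw [hx_eq hle ⟨j - 1, hj1⟩] at h2 h1
    rw [hx_eq hle ⟨j, hj⟩] at h2 h1 h3
    simp only [Fin.val_mk] at h2 h1 h3
    have hn1 : ¬ (j ≤ j - 1) := by omega
    rw [if_neg hn1, if_pos le_rfl] at h2 h1
    omega

/-- L4 -/
lemma Cnd_succ_not (hj : j < p) (hn : ¬ Cnd π j e) (h : Cnd π (j + 1) e) :
    Eu π j ≤ e ∧ Cnd π (j + 1) (e - Eu π j) := by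
  obtain ⟨c1, c2, c3, _, c5⟩ := h
  have hconst : ∀ m1 m2 : Fin p, j ≤ (m1 : ℕ) → m1 ≤ m2 → hX π e m2 = hX π e m1 := by
    intro m1 m2 hm1 h12
    exact le_antisymm (c3 m1 m2 h12 (by omega)) (c2 m1 m2 h12)
  have key : (∀ m : Fin p, j ≤ (m : ℕ) → 1 ≤ hX π e m) ∧
      (∀ ma mb : Fin p, (ma : ℕ) < j → j ≤ (mb : ℕ) → hX π e ma < hX π e mb) := by
    by_cases hfail3 : ∀ m1 m2 : Fin p, m1 ≤ m2 → j ≤ (m1 : ℕ) + 1 → hX π e m2 ≤ hX π e m1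
    · have hj0 : j = 0 ∧ ∃ m : Fin p, hX π e m ≠ 0 := by
        by_cases hz : j = 0
        · refine ⟨hz, ?_⟩
          by_contra hc
          push_neg at hc
          exact hn ⟨c1, c2, hfail3, fun _ m => hc m, c5⟩
        · exact absurd ⟨c1, c2, hfail3, fun h0 => absurd h0 hz, c5⟩ hn
      obtain ⟨hj0, m0, hm0⟩ := hj0
      subst hj0
      have hcst : ∀ m : Fin p, hX π e m = hX π e m0 := by
        intro m
        rcases le_total m m0 with hh | hh
        · exact (hconst m m0 (by omega) hh).symm
        · exact hconst m0 m (by omega) hh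
      refine ⟨fun m _ => by rw [hcst m]; omega, fun ma mb hma => by omega⟩
    · push_neg at hfail3
      obtain ⟨m1, m2, h12, hj1, hlt⟩ := hfail3
      have hv : (m1 : ℕ) ≤ (m2 : ℕ) := h12
      have hm1j : (m1 : ℕ) < j := by
        by_contra hc
        push_neg at hc
        exact absurd (c3 m1 m2 h12 (by omega)) (by omega)
      have hm2j : j ≤ (m2 : ℕ) := by
        rcases Nat.lt_or_ge (m2 : ℕ) j with hc | hc
        · have := c2 m2 m1 (by omega)
          omega
        · exact hc
      have hval : ∀ m : Fin p, j ≤ (m : ℕ) → hX π e m = hX π e m2 := by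
        intro m hm
        rcases le_total m m2 with hh | hh
        · exact (hconst m m2 hm hh).symm
        · exact hconst m2 m hm2j hh
      constructor
      · intro m hm; rw [hval m hm]; omega
      · intro ma mb hma hmb
        rw [hval mb hmb]
        have : hX π e ma ≤ hX π e m1 := c2 ma m1 (by omega)
        omega
  obtain ⟨G1, G3⟩ := key
  have G2 : 1 ≤ e (Sum.inr ()) := le_trans (G1 ⟨j, hj⟩ (by simp only [Fin.val_mk]; omega)) (c5 ⟨j, hj⟩)
  have hle : Eu π j ≤ e := by
    refine le_xyt π (fun m => ?_) (fun z => by rw [Eu_y]; omega) (by rw [Eu_t]; exact G2)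
    rw [Eu_x]
    by_cases hm : j ≤ (m : ℕ)
    · rw [if_pos hm]; exact G1 m hm
    · rw [if_neg hm]; omega
  refine ⟨hle, ?_, ?_, ?_, by omega, ?_⟩
  · intro z; rw [sub_y, Eu_y]; rw [c1 z]
  · intro m1 m2 h12
    have hv : (m1 : ℕ) ≤ (m2 : ℕ) := h12
    have hc2 := c2 m1 m2 h12
    have he1 := hx_eq hle m1
    have he2 := hx_eq hle m2
    by_cases hm1 : j ≤ (m1 : ℕ)
    · rw [if_pos hm1] at he1; rw [if_pos (by omega)] at he2
      have := G1 m1 hm1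
      omega
    · rw [if_neg hm1] at he1
      by_cases hm2 : j ≤ (m2 : ℕ)
      · rw [if_pos hm2] at he2
        have := G3 m1 m2 (by omega) hm2
        omega
      · rw [if_neg hm2] at he2; omega
  · intro m1 m2 h12 hj1
    have hv : (m1 : ℕ) ≤ (m2 : ℕ) := h12
    have hm1 : j ≤ (m1 : ℕ) := by omega
    have he1 := hx_eq hle m1
    have he2 := hx_eq hle m2
    rw [if_pos hm1] at he1; rw [if_pos (by omega)] at he2
    have hc3 := c3 m1 m2 h12 (by omega)
    have := G1 m1 hm1
    omega
  · intro m
    have he := hx_eq hle m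
    have het := ht_eq hle
    have hc5 := c5 m
    by_cases hm : j ≤ (m : ℕ)
    · rw [if_pos hm] at he
      have := G1 m hm
      omega
    · rw [if_neg hm] at he
      have hG := G3 m ⟨j, hj⟩ (by omega) (by simp only [Fin.val_mk]; omega)
      have hc5' := c5 ⟨j, hj⟩
      have he2 := hx_eq hle ⟨j, hj⟩
      simp only [Fin.val_mk] at he2
      rw [if_pos le_rfl] at he2
      omega

end Sub
end LH
namespace LH

variable {p : ℕ}

lemma tvar_le_iff (e : XYT p →₀ ℕ) : etv p ≤ e ↔ 1 ≤ e (Sum.inr ()) := by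
  constructor
  · intro h; have := h (Sum.inr ()); simpa using this
  · intro h
    refine le_xyt (Equiv.refl _) (fun m => by simp [etv]) (fun z => by simp [etv]) ?_
    simpa [etv] using h

lemma Gser_zero_mul (π : Equiv.Perm (Fin p)) : Gser π 0 * (1 - tvar p) = 1 := by
  ext e
  rw [tvar_eq, mul_sub, mul_one, map_sub, MvPowerSeries.coeff_mul_monomial, coeff_Gser,
    MvPowerSeries.coeff_one]
  have hsubx : ∀ m : Fin p, hX π (e - etv p) m = hX π e m := by
    intro m; simp [hX, Finsupp.tsub_apply, etv]
  have hsuby : ∀ z : Fin p, (e - etv p) (Sum.inl (Sum.inr z)) = e (Sum.inl (Sum.inr z)) := by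
    intro z; simp [Finsupp.tsub_apply, etv]
  by_cases hC : Cnd π 0 e
  · by_cases h0 : e (Sum.inr ()) = 0
    · have he : e = 0 := by
        ext c
        rcases c with (z | z) | u
        · have := hC.2.2.2.1 rfl (π.symm z); simpa [hX] using this
        · exact hC.1 z
        · cases u; exact h0
      rw [if_pos hC, if_pos he, if_neg (by rw [tvar_le_iff]; omega)]
      ring
    · have hle : etv p ≤ e := (tvar_le_iff e).2 (by omega)
      have hC' : Cnd π 0 (e - etv p) := by
        obtain ⟨c1, c2, c3, c4, c5⟩ := hC
        refine ⟨fun z => by rw [hsuby]; exact c1 z, ?_, ?_, ?_, ?_⟩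
        · intro m1 m2 h12; rw [hsubx, hsubx]; exact c2 m1 m2 h12
        · intro m1 m2 h12 _; rw [hsubx, hsubx]; exact c3 m1 m2 h12 (by omega)
        · intro _ m; rw [hsubx]; exact c4 rfl m
        · intro m
          rw [hsubx, sub_t]
          have := c4 rfl m
          rw [this]
          omega
      rw [if_pos hC, if_pos hle, coeff_Gser, if_pos hC',
        if_neg (by intro h; rw [h] at h0; simp at h0)]
      ring
  · rw [if_neg hC]
    have hne : ¬ e = 0 := by
      intro h
      exact hC (by subst h; refine ⟨fun z => rfl, fun _ _ _ => le_rfl, fun _ _ _ _ => le_rfl,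
        fun _ m => rfl, fun m => le_rfl⟩)
    rw [if_neg hne]
    by_cases hle : etv p ≤ e
    · rw [if_pos hle, coeff_Gser, if_neg]
      · ring
      · intro hC'
        obtain ⟨c1, c2, c3, c4, c5⟩ := hC'
        refine hC ⟨fun z => by rw [← hsuby]; exact c1 z, ?_, ?_, ?_, ?_⟩
        · intro m1 m2 h12; rw [← hsubx, ← hsubx]; exact c2 m1 m2 h12
        · intro m1 m2 h12 _; rw [← hsubx, ← hsubx]; exact c3 m1 m2 h12 (by omega)
        · intro _ m; rw [← hsubx]; exact c4 rfl m
        · intro m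
          have := c4 rfl m
          rw [← hsubx, this]
          omega
    · rw [if_neg hle]; ring

lemma Gser_step (π : Equiv.Perm (Fin p)) {j : ℕ} (hj : j < p) :
    Gser π (j + 1) * (1 - xprod π j * tvar p) = Gser π j := by
  ext e
  rw [xprod_eq, tvar_eq, MvPowerSeries.monomial_mul_monomial, one_mul, mul_sub, mul_one,
    map_sub, MvPowerSeries.coeff_mul_monomial]
  have hEu : exI π j + etv p = Eu π j := rfl
  rw [hEu, coeff_Gser π (j + 1) e, coeff_Gser π (j + 1) (e - Eu π j), coeff_Gser π j e]
  by_cases hC : Cnd π j e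
  · rw [if_pos hC, if_pos (Cnd_mono hC)]
    by_cases hle : Eu π j ≤ e
    · rw [if_pos hle, if_neg (fun h => Cnd_not_sub hj hC hle h)]
      ring
    · rw [if_neg hle]; ring
  · rw [if_neg hC]
    by_cases hC1 : Cnd π (j + 1) e
    · obtain ⟨hle, hC'⟩ := Cnd_succ_not hj hC hC1
      rw [if_pos hC1, if_pos hle, if_pos hC']
      ring
    · rw [if_neg hC1]
      by_cases hle : Eu π j ≤ e
      · rw [if_pos hle, if_neg (fun h => hC1 (Cnd_addback hle h))]
        ring
      · rw [if_neg hle]; ring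

lemma constCoeff_one_sub_tvar :
    MvPowerSeries.constantCoeff (1 - tvar p) = 1 := by
  rw [map_sub, map_one, tvar, MvPowerSeries.constantCoeff_X, sub_zero]

lemma constCoeff_one_sub_xt (π : Equiv.Perm (Fin p)) (j : ℕ) :
    MvPowerSeries.constantCoeff (1 - xprod π j * tvar p) = 1 := by
  rw [map_sub, map_one, xprod_eq, tvar_eq, MvPowerSeries.monomial_mul_monomial, one_mul]
  have : (MvPowerSeries.constantCoeff (R := ℚ)) ((MvPowerSeries.monomial (R := ℚ) (exI π j + etv p)) 1) = 0 := by
    rw [← MvPowerSeries.coeff_zero_eq_constantCoeff, MvPowerSeries.coeff_monomial,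
      if_neg (fun h => by
        have h2 : (exI π j + etv p) (Sum.inr ()) = 0 := by rw [← h]; rfl
        simp [etv] at h2)]
  rw [this, sub_zero]

lemma Gser_eq (π : Equiv.Perm (Fin p)) :
    ∀ j, j ≤ p →
      Gser π j = (1 - tvar p)⁻¹ * ∏ i ∈ Finset.range j, (1 - xprod π i * tvar p)⁻¹ := by
  intro j
  induction j with
  | zero =>
    intro _
    rw [Finset.range_zero, Finset.prod_empty, mul_one,
      MvPowerSeries.eq_inv_iff_mul_eq_one (by rw [constCoeff_one_sub_tvar]; norm_num)]
    exact Gser_zero_mul π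
  | succ j ih =>
    intro hj
    have hjp : j < p := by omega
    have h1 : Gser π (j + 1) = Gser π j * (1 - xprod π j * tvar p)⁻¹ := by
      rw [MvPowerSeries.eq_mul_inv_iff_mul_eq (by rw [constCoeff_one_sub_xt]; norm_num)]
      exact Gser_step π hjp
    rw [h1, ih (by omega), Finset.prod_range_succ, mul_assoc]

lemma monomial_pow_one (E : XYT p →₀ ℕ) (k : ℕ) :
    (MvPowerSeries.monomial (R := ℚ) E 1) ^ k = MvPowerSeries.monomial (R := ℚ) (k • E) 1 := by
  induction k with
  | zero => simp [MvPowerSeries.monomial_zero_one]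
  | succ k ih =>
    rw [pow_succ, ih, MvPowerSeries.monomial_mul_monomial, one_mul, succ_nsmul]

/-- Exponent of the monomial prefactor. -/
def eM (π : Equiv.Perm (Fin p)) (r : Fin p → ℕ) (D : Finset ℕ) : XYT p →₀ ℕ :=
  eyv r + (∑ i ∈ D, exI π i) + D.card • etv p

lemma coeff_full (π : Equiv.Perm (Fin p)) (r : Fin p → ℕ) (D : Finset ℕ) (d : XYT p →₀ ℕ) :
    MvPowerSeries.coeff d
        (yprod r * (∏ i ∈ D, xprod π i) * tvar p ^ D.card * (1 - tvar p)⁻¹ *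
          ∏ i : Fin p, (1 - xprod π (i : ℕ) * tvar p)⁻¹) =
      if eM π r D ≤ d ∧ Cnd π p (d - eM π r D) then 1 else 0 := by
  have hM : yprod r * (∏ i ∈ D, xprod π i) * tvar p ^ D.card =
      MvPowerSeries.monomial (R := ℚ) (eM π r D) 1 := by
    rw [yprod_eq, tvar_eq, monomial_pow_one]
    have : (∏ i ∈ D, xprod π i) = MvPowerSeries.monomial (R := ℚ) (∑ i ∈ D, exI π i) 1 := by
      rw [← prod_monomial]
      exact Finset.prod_congr rfl fun i _ => xprod_eq π i
    rw [this, MvPowerSeries.monomial_mul_monomial, MvPowerSeries.monomial_mul_monomial, eM]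
    norm_num
  have hG : (1 - tvar p)⁻¹ * ∏ i : Fin p, (1 - xprod π (i : ℕ) * tvar p)⁻¹ = Gser π p := by
    rw [(Gser_eq π p le_rfl :), Fin.prod_univ_eq_prod_range (fun i => (1 - xprod π i * tvar p)⁻¹) p]
  have key : yprod r * (∏ i ∈ D, xprod π i) * tvar p ^ D.card * (1 - tvar p)⁻¹ *
      ∏ i : Fin p, (1 - xprod π (i : ℕ) * tvar p)⁻¹ =
      MvPowerSeries.monomial (R := ℚ) (eM π r D) 1 * Gser π p := by
    rw [← hM, ← hG]; ring
  rw [key, MvPowerSeries.coeff_monomial_mul, coeff_Gser]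
  by_cases h1 : eM π r D ≤ d
  · by_cases h2 : Cnd π p (d - eM π r D)
    · rw [if_pos h1, if_pos h2, if_pos ⟨h1, h2⟩]; ring
    · rw [if_pos h1, if_neg h2, if_neg (by tauto)]; ring
  · rw [if_neg h1, if_neg (by tauto)]

end LH
namespace LH

variable {p : ℕ}

section D4mem

variable (hp : 0 < p) (s : Fin p → ℕ) (π : Equiv.Perm (Fin p)) (r : Fin p → ℕ)

lemma mem_D1_iff (i : ℕ) : i ∈ D1 s π r ↔ (1 ≤ i ∧ i ≤ p - 1 ∧ IsDesc s π r i) := by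
  simp [D1, Finset.mem_filter, Finset.mem_Icc, and_assoc]

lemma zero_mem_D4 : 0 ∈ D4 hp s π r ↔ r (π ⟨0, hp⟩) = 0 := by
  have h1 : (0 : ℕ) ∉ D1 s π r := by rw [mem_D1_iff]; omega
  have h0 : (0 : ℕ) ≠ p := by omega
  unfold D4 D2
  by_cases hA : r (π ⟨p - 1, Nat.sub_lt hp Nat.one_pos⟩) = 0 <;>
    by_cases hB : r (π ⟨0, hp⟩) = 0 <;>
    simp [hA, hB, Finset.mem_insert, h1, h0]

lemma p_mem_D4 : p ∈ D4 hp s π r ↔ r (π ⟨p - 1, Nat.sub_lt hp Nat.one_pos⟩) ≠ 0 := by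
  have h1 : p ∉ D1 s π r := by rw [mem_D1_iff]; omega
  have h0 : p ≠ 0 := by omega
  unfold D4 D2
  by_cases hA : r (π ⟨p - 1, Nat.sub_lt hp Nat.one_pos⟩) = 0 <;>
    by_cases hB : r (π ⟨0, hp⟩) = 0 <;>
    simp [hA, hB, Finset.mem_insert, h1, h0]

lemma mid_mem_D4 (i : ℕ) (hi1 : 1 ≤ i) (hi2 : i ≤ p - 1) :
    i ∈ D4 hp s π r ↔ IsDesc s π r i := by
  have h0 : i ≠ 0 := by omega
  have hip : i ≠ p := by omega
  have hmem : i ∈ D4 hp s π r ↔ i ∈ D1 s π r := by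
    unfold D4 D2
    by_cases hA : r (π ⟨p - 1, Nat.sub_lt hp Nat.one_pos⟩) = 0 <;>
      by_cases hB : r (π ⟨0, hp⟩) = 0 <;>
      simp [hA, hB, Finset.mem_insert, h0, hip]
  rw [hmem, mem_D1_iff]
  tauto

lemma D4_le (i : ℕ) (hi : i ∈ D4 hp s π r) : i ≤ p := by
  by_contra hc
  push_neg at hc
  have h1 : i ∉ D1 s π r := by rw [mem_D1_iff]; omega
  have h0 : i ≠ 0 := by omega
  have hip : i ≠ p := by omega
  unfold D4 D2 at hi
  revert hi
  by_cases hA : r (π ⟨p - 1, Nat.sub_lt hp Nat.one_pos⟩) = 0 <;>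
    by_cases hB : r (π ⟨0, hp⟩) = 0 <;>
    simp [hA, hB, Finset.mem_insert, h1, h0, hip]

end D4mem

/-- `cnt D m = #{i ∈ D : i ≤ m}`. -/
def cnt (D : Finset ℕ) (m : ℕ) : ℕ := (D.filter (· ≤ m)).card

lemma cnt_succ (D : Finset ℕ) (m : ℕ) :
    cnt D (m + 1) = cnt D m + (if m + 1 ∈ D then 1 else 0) := by
  unfold cnt
  by_cases h : m + 1 ∈ D
  · have hins : D.filter (· ≤ m + 1) = insert (m + 1) (D.filter (· ≤ m)) := by
      ext i
      simp only [Finset.mem_filter, Finset.mem_insert]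
      constructor
      · rintro ⟨hi, hle⟩
        by_cases hieq : i = m + 1
        · exact Or.inl hieq
        · exact Or.inr ⟨hi, by omega⟩
      · rintro (rfl | ⟨hi, hle⟩)
        · exact ⟨h, le_rfl⟩
        · exact ⟨hi, by omega⟩
    rw [if_pos h, hins, Finset.card_insert_of_notMem (fun hc => by
      simp only [Finset.mem_filter] at hc; omega)]
  · have heq : D.filter (· ≤ m + 1) = D.filter (· ≤ m) := by
      ext i
      simp only [Finset.mem_filter]
      constructor
      · rintro ⟨hi, hle⟩
        refine ⟨hi, ?_⟩
        by_cases hieq : i = m + 1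
        · subst hieq; exact absurd hi h
        · omega
      · rintro ⟨hi, hle⟩
        exact ⟨hi, by omega⟩
    rw [if_neg h, heq, add_zero]

lemma cnt_zero (D : Finset ℕ) : cnt D 0 = if 0 ∈ D then 1 else 0 := by
  unfold cnt
  by_cases h : 0 ∈ D
  · rw [if_pos h]
    have heq : D.filter (· ≤ 0) = {0} := by
      ext i
      simp only [Finset.mem_filter, Finset.mem_singleton]
      constructor
      · rintro ⟨hi, hle⟩; omega
      · rintro rfl; exact ⟨h, le_rfl⟩
    rw [heq, Finset.card_singleton]
  · rw [if_neg h]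
    have heq : D.filter (· ≤ 0) = ∅ := by
      ext i
      simp only [Finset.mem_filter, Finset.notMem_empty, iff_false]
      rintro ⟨hi, hle⟩
      have : i = 0 := by omega
      subst this
      exact h hi
    rw [heq, Finset.card_empty]

lemma cnt_total (D : Finset ℕ) (N : ℕ) (hD : ∀ i ∈ D, i ≤ N) : cnt D N = D.card := by
  unfold cnt
  congr 1
  exact Finset.filter_true_of_mem hD

section eMcoord

variable (π : Equiv.Perm (Fin p)) (r : Fin p → ℕ) (D : Finset ℕ)

lemma eM_y (z : Fin p) : eM π r D (Sum.inl (Sum.inr z)) = r z := by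
  unfold eM
  rw [Finsupp.add_apply, Finsupp.add_apply, eyv_y, Finsupp.smul_apply, etv_y,
    Finsupp.finset_sum_apply]
  rw [Finset.sum_eq_zero (fun i _ => exI_y π i z)]
  simp

lemma eM_x (m : Fin p) : eM π r D (Sum.inl (Sum.inl (π m))) = cnt D (m : ℕ) := by
  unfold eM cnt
  rw [Finsupp.add_apply, Finsupp.add_apply, eyv_x, Finsupp.smul_apply, etv_x,
    Finsupp.finset_sum_apply]
  rw [Finset.sum_congr rfl (fun i _ => exI_x π i m)]
  rw [Finset.card_filter]
  simp

lemma eM_t : eM π r D (Sum.inr ()) = D.card := by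
  unfold eM
  rw [Finsupp.add_apply, Finsupp.add_apply, eyv_t, Finsupp.smul_apply, etv_t,
    Finsupp.finset_sum_apply]
  rw [Finset.sum_eq_zero (fun i _ => exI_t π i)]
  simp [mul_comm]

end eMcoord

/-- Adjacent-differences form of compatibility. -/
def Adj (hp : 0 < p) (π : Equiv.Perm (Fin p)) (D : Finset ℕ) (d : XYT p →₀ ℕ) : Prop :=
  ((if 0 ∈ D then 1 else 0) ≤ hX π d ⟨0, hp⟩) ∧
  (∀ m : ℕ, ∀ hm : m + 1 < p,
    hX π d ⟨m, by omega⟩ + (if m + 1 ∈ D then 1 else 0) ≤ hX π d ⟨m + 1, hm⟩) ∧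
  (hX π d ⟨p - 1, Nat.sub_lt hp Nat.one_pos⟩ + (if p ∈ D then 1 else 0) ≤ d (Sum.inr ()))

lemma adj_iff (hp : 0 < p) (π : Equiv.Perm (Fin p)) (r : Fin p → ℕ) (D : Finset ℕ)
    (hD : ∀ i ∈ D, i ≤ p) (d : XYT p →₀ ℕ) :
    (eM π r D ≤ d ∧ Cnd π p (d - eM π r D)) ↔
      ((∀ z : Fin p, d (Sum.inl (Sum.inr z)) = r z) ∧ Adj hp π D d) := by
  have hcard : cnt D (p - 1) + (if p ∈ D then 1 else 0) = D.card := by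
    have hp1 : p - 1 + 1 = p := by omega
    rw [← cnt_total D p hD, ← hp1, cnt_succ, hp1]
  have hsubx : ∀ m : Fin p, hX π (d - eM π r D) m = hX π d m - cnt D (m : ℕ) := by
    intro m
    rw [hX_sub]
    simp only [hX, eM_x]
  constructor
  · rintro ⟨hle, c1, c2, c3, _, c5⟩
    have hxle : ∀ m : Fin p, cnt D (m : ℕ) ≤ hX π d m := by
      intro m
      have := hle (Sum.inl (Sum.inl (π m)))
      rwa [eM_x] at this
    refine ⟨?_, ?_, ?_, ?_⟩
    · intro z
      have h1 := c1 z
      rw [sub_y, eM_y] at h1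
      have h2 := hle (Sum.inl (Sum.inr z))
      rw [eM_y] at h2
      omega
    · have h1 : cnt D ((0 : ℕ)) ≤ hX π d ⟨0, hp⟩ := hxle ⟨0, hp⟩
      rw [cnt_zero] at h1
      exact h1
    · intro m hm
      have h2 := c2 ⟨m, by omega⟩ ⟨m + 1, hm⟩ (by simp [Fin.le_def])
      rw [hsubx, hsubx] at h2
      have e1 : cnt D m ≤ hX π d ⟨m, by omega⟩ := hxle ⟨m, by omega⟩
      have e2 : cnt D (m + 1) ≤ hX π d ⟨m + 1, hm⟩ := hxle ⟨m + 1, hm⟩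
      have e3 := cnt_succ D m
      have h2' : hX π d ⟨m, by omega⟩ - cnt D m ≤ hX π d ⟨m + 1, hm⟩ - cnt D (m + 1) := h2
      omega
    · have h5 := c5 ⟨p - 1, Nat.sub_lt hp Nat.one_pos⟩
      rw [hsubx, sub_t, eM_t] at h5
      have e1 : cnt D (p - 1) ≤ hX π d ⟨p - 1, Nat.sub_lt hp Nat.one_pos⟩ :=
        hxle ⟨p - 1, Nat.sub_lt hp Nat.one_pos⟩
      have htle : eM π r D (Sum.inr ()) ≤ d (Sum.inr ()) := hle (Sum.inr ())
      rw [eM_t] at htle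
      have h5' : hX π d ⟨p - 1, Nat.sub_lt hp Nat.one_pos⟩ - cnt D (p - 1) ≤
          d (Sum.inr ()) - D.card := h5
      omega
  · rintro ⟨hy, a0, astep, alast⟩
    have hxle : ∀ m : ℕ, ∀ hm : m < p, cnt D m ≤ hX π d ⟨m, hm⟩ := by
      intro m
      induction m with
      | zero =>
        intro hm
        rw [cnt_zero]
        exact a0
      | succ m ih =>
        intro hm
        have hm' : m < p := by omega
        have h1 := astep m hm
        have h2 := ih hm'
        rw [cnt_succ]
        omega
    have hmono : ∀ m2 : ℕ, ∀ hm2 : m2 < p, ∀ m1 : ℕ, ∀ hm1 : m1 < p, m1 ≤ m2 →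
        hX π d ⟨m1, hm1⟩ - cnt D m1 ≤ hX π d ⟨m2, hm2⟩ - cnt D m2 := by
      intro m2
      induction m2 with
      | zero =>
        intro hm2 m1 hm1 h12
        have : m1 = 0 := by omega
        subst this
        exact le_rfl
      | succ m2 ih =>
        intro hm2 m1 hm1 h12
        rcases Nat.lt_or_ge m1 (m2 + 1) with hlt | hge
        · have hm2' : m2 < p := by omega
          have h1 := ih hm2' m1 hm1 (by omega)
          have h2 := astep m2 hm2
          have e1 := hxle m1 hm1
          have e2 := hxle m2 hm2'
          have e3 := hxle (m2 + 1) hm2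
          rw [cnt_succ]
          omega
        · have : m1 = m2 + 1 := by omega
          subst this
          exact le_rfl
    have htle : eM π r D (Sum.inr ()) ≤ d (Sum.inr ()) := by
      rw [eM_t, ← hcard]
      have := hxle (p - 1) (Nat.sub_lt hp Nat.one_pos)
      omega
    have hle : eM π r D ≤ d := by
      refine le_xyt π (fun m => ?_) (fun z => ?_) htle
      · rw [eM_x]
        have := hxle (m : ℕ) m.isLt
        simpa [Fin.eta, hX] using this
      · rw [eM_y, hy z]
    refine ⟨hle, fun z => ?_, fun m1 m2 h12 => ?_, fun m1 m2 h12 hp1 => ?_,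
      fun h0 => absurd h0 (by omega), fun m => ?_⟩
    · rw [sub_y, eM_y, hy z]
      omega
    · rw [hsubx, hsubx]
      have := hmono (m2 : ℕ) m2.isLt (m1 : ℕ) m1.isLt h12
      simpa [Fin.eta] using this
    · have he : m1 = m2 := by
        have h1 : (m1 : ℕ) ≤ (m2 : ℕ) := h12
        have h2 : (m2 : ℕ) < p := m2.isLt
        exact Fin.ext (by omega)
      subst he
      exact le_rfl
    · rw [hsubx, sub_t, eM_t]
      have h1 := hmono (p - 1) (Nat.sub_lt hp Nat.one_pos) (m : ℕ) m.isLt (by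
        have := m.isLt; omega)
      simp only [Fin.eta] at h1
      have h2 := hxle (p - 1) (Nat.sub_lt hp Nat.one_pos)
      have h3 := hxle (m : ℕ) m.isLt
      simp only [Fin.eta] at h3
      omega

end LH
namespace LH

variable {p : ℕ}

section RatLemmas

lemma rat_asc {qx qy : ℕ} {bx bz : ℚ} (hx0 : 0 ≤ bx) (hx1 : bx < 1) (hz0 : 0 ≤ bz)
    (hz1 : bz < 1) :
    (qx + (if bz < bx then 1 else 0) ≤ qy) ↔ ((qx : ℚ) + bx ≤ (qy : ℚ) + bz) := by
  by_cases h : bz < bx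
  · rw [if_pos h]
    constructor
    · intro hle
      have h2 : (qx : ℚ) + 1 ≤ (qy : ℚ) := by exact_mod_cast hle
      linarith
    · intro hle
      have h2 : (qx : ℚ) < (qy : ℚ) := by linarith
      have h3 : qx < qy := by exact_mod_cast h2
      omega
  · rw [if_neg h]
    push_neg at h
    rw [add_zero]
    constructor
    · intro hle
      have h2 : (qx : ℚ) ≤ (qy : ℚ) := by exact_mod_cast hle
      linarith
    · intro hle
      have h2 : (qx : ℚ) < (qy : ℚ) + 1 := by linarith
      have h3 : qx < qy + 1 := by exact_mod_cast h2
      omega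

lemma rat_desc {qx qy : ℕ} {bx bz : ℚ} (hx0 : 0 ≤ bx) (hx1 : bx < 1) (hz0 : 0 ≤ bz)
    (hz1 : bz < 1) :
    (qx + (if bz ≤ bx then 1 else 0) ≤ qy) ↔ ((qx : ℚ) + bx < (qy : ℚ) + bz) := by
  by_cases h : bz ≤ bx
  · rw [if_pos h]
    constructor
    · intro hle
      have h2 : (qx : ℚ) + 1 ≤ (qy : ℚ) := by exact_mod_cast hle
      linarith
    · intro hle
      have h2 : (qx : ℚ) < (qy : ℚ) := by linarith
      have h3 : qx < qy := by exact_mod_cast h2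
      omega
  · rw [if_neg h]
    push_neg at h
    rw [add_zero]
    constructor
    · intro hle
      have h2 : (qx : ℚ) ≤ (qy : ℚ) := by exact_mod_cast hle
      linarith
    · intro hle
      have h2 : (qx : ℚ) < (qy : ℚ) + 1 := by linarith
      have h3 : qx < qy + 1 := by exact_mod_cast h2
      omega

lemma rat_zero {q bnat : ℕ} {bx : ℚ} (h0 : 0 ≤ bx) (heq : bx = 0 ↔ bnat = 0) :
    ((if bnat = 0 then 1 else 0) ≤ q) ↔ (0 : ℚ) < (q : ℚ) + bx := by
  by_cases h : bnat = 0
  · rw [if_pos h, heq.2 h, add_zero]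
    constructor
    · intro hle
      exact_mod_cast Nat.lt_of_lt_of_le Nat.zero_lt_one hle
    · intro hlt
      have : 0 < q := by exact_mod_cast hlt
      omega
  · rw [if_neg h]
    have hbx : 0 < bx := lt_of_le_of_ne h0 (fun hc => h (heq.1 hc.symm))
    constructor
    · intro _
      have : (0 : ℚ) ≤ (q : ℚ) := by positivity
      linarith
    · intro _; omega

lemma rat_end {q n bnat : ℕ} {bx : ℚ} (h1 : bx < 1) (h0 : 0 ≤ bx)
    (heq : bx = 0 ↔ bnat = 0) :
    (q + (if bnat ≠ 0 then 1 else 0) ≤ n) ↔ ((q : ℚ) + bx ≤ (n : ℚ)) := by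
  by_cases h : bnat = 0
  · simp only [h, ne_eq, not_true_eq_false, if_false, add_zero]
    rw [heq.2 h, add_zero]
    exact_mod_cast Iff.rfl
  · simp only [ne_eq, h, not_false_eq_true, if_true]
    have hbx : 0 < bx := lt_of_le_of_ne h0 (fun hc => h (heq.1 hc.symm))
    constructor
    · intro hle
      have h2 : (q : ℚ) + 1 ≤ (n : ℚ) := by exact_mod_cast hle
      linarith
    · intro hle
      have h2 : (q : ℚ) < (n : ℚ) := by linarith
      have h3 : q < n := by exact_mod_cast h2
      omega

end RatLemmas

/-- The rational value `a z + b z / s z`. -/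
def vr (s b : Fin p → ℕ) (d : XYT p →₀ ℕ) (z : Fin p) : ℚ :=
  (d (Sum.inl (Sum.inl z)) : ℚ) + (b z : ℚ) / (s z : ℚ)

/-- The sorting key. -/
def keyf (s b : Fin p → ℕ) (d : XYT p →₀ ℕ) (z : Fin p) : Lex (ℚ × Fin p) :=
  toLex (vr s b d z, z)

lemma keyf_inj (s b : Fin p → ℕ) (d : XYT p →₀ ℕ) : Function.Injective (keyf s b d) := by
  intro z w h
  have := congrArg (fun u => (ofLex u).2) h
  simpa [keyf] using this

lemma beta_nonneg {s b : Fin p → ℕ} (z : Fin p) : (0 : ℚ) ≤ (b z : ℚ) / (s z : ℚ) := by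
  positivity

lemma beta_lt_one {s b : Fin p → ℕ} (hs : ∀ z, 0 < s z) (hb : ∀ z, b z < s z) (z : Fin p) :
    (b z : ℚ) / (s z : ℚ) < 1 := by
  rw [div_lt_one (by exact_mod_cast hs z)]
  exact_mod_cast hb z

lemma beta_eq_zero_iff {s b : Fin p → ℕ} (hs : ∀ z, 0 < s z) (z : Fin p) :
    ((b z : ℚ) / (s z : ℚ) = 0) ↔ b z = 0 := by
  rw [div_eq_zero_iff]
  constructor
  · rintro (h | h)
    · exact_mod_cast h
    · exact absurd h (Nat.cast_ne_zero.mpr (hs z).ne')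
  · intro h; left; exact_mod_cast h

lemma lex_lt_iff (x y : ℚ × Fin p) :
    toLex x < toLex y ↔ x.1 < y.1 ∨ (x.1 = y.1 ∧ x.2 < y.2) :=
  Prod.Lex.toLex_lt_toLex

/-- The key step equivalence. -/
lemma step_iff (hp : 0 < p) {s b : Fin p → ℕ} (hs : ∀ z, 0 < s z) (hb : ∀ z, b z < s z)
    (π : Equiv.Perm (Fin p)) (d : XYT p →₀ ℕ) (m : ℕ) (hm : m + 1 < p) :
    (hX π d ⟨m, by omega⟩ + (if m + 1 ∈ D4 hp s π b then 1 else 0) ≤ hX π d ⟨m + 1, hm⟩) ↔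
      keyf s b d (π ⟨m, by omega⟩) < keyf s b d (π ⟨m + 1, hm⟩) := by
  have hmp : m < p := by omega
  set x : Fin p := π ⟨m, hmp⟩ with hxdef
  set x' : Fin p := π ⟨m + 1, hm⟩ with hx'def
  have hxx' : x ≠ x' := by
    intro hc
    have := π.injective hc
    have : (⟨m, hmp⟩ : Fin p) = ⟨m + 1, hm⟩ := this
    have := Fin.mk.inj_iff.1 this
    omega
  have hdesc : IsDesc s π (fun z => b z) (m + 1) ↔
      ((x < x' ∧ (b x' : ℚ) / (s x' : ℚ) < (b x : ℚ) / (s x : ℚ)) ∨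
       (x' < x ∧ (b x' : ℚ) / (s x' : ℚ) ≤ (b x : ℚ) / (s x : ℚ))) := by
    unfold IsDesc
    constructor
    · rintro ⟨h1, h2, hd⟩
      have e1 : (⟨m + 1 - 1, h1⟩ : Fin p) = ⟨m, hmp⟩ := by
        apply Fin.ext; simp
      have e2 : (⟨m + 1, h2⟩ : Fin p) = ⟨m + 1, hm⟩ := rfl
      rw [e1, e2] at hd
      rcases hd with ⟨ha, hbb⟩ | ⟨ha, hbb⟩
      · exact Or.inl ⟨ha, hbb⟩
      · exact Or.inr ⟨ha, hbb⟩
    · intro hd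
      refine ⟨by omega, by omega, ?_⟩
      have e1 : (⟨m + 1 - 1, by omega⟩ : Fin p) = ⟨m, hmp⟩ := by
        apply Fin.ext; simp
      rw [e1]
      rcases hd with ⟨ha, hbb⟩ | ⟨ha, hbb⟩
      · exact Or.inl ⟨ha, hbb⟩
      · exact Or.inr ⟨ha, hbb⟩
  have hmem : (m + 1 ∈ D4 hp s π b) ↔ IsDesc s π (fun z => b z) (m + 1) :=
    mid_mem_D4 hp s π (fun z => b z) (m + 1) (by omega) (by omega)
  have hXx : hX π d ⟨m, hmp⟩ = d (Sum.inl (Sum.inl x)) := rfl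
  have hXx' : hX π d ⟨m + 1, hm⟩ = d (Sum.inl (Sum.inl x')) := rfl
  rw [if_congr (hmem.trans hdesc) rfl rfl, keyf, keyf, lex_lt_iff]
  rcases lt_trichotomy x x' with hlt | heq | hgt
  · -- ascending labels
    have hnot : ¬ (x' < x) := not_lt_of_gt hlt
    have hiff1 : ((x < x' ∧ (b x' : ℚ) / (s x' : ℚ) < (b x : ℚ) / (s x : ℚ)) ∨
        (x' < x ∧ (b x' : ℚ) / (s x' : ℚ) ≤ (b x : ℚ) / (s x : ℚ))) ↔
        ((b x' : ℚ) / (s x' : ℚ) < (b x : ℚ) / (s x : ℚ)) := by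
      constructor
      · rintro (⟨_, h⟩ | ⟨h, _⟩)
        · exact h
        · exact absurd h hnot
      · intro h; exact Or.inl ⟨hlt, h⟩
    rw [if_congr hiff1 rfl rfl]
    rw [hXx, hXx']
    rw [rat_asc (beta_nonneg x) (beta_lt_one hs hb x) (beta_nonneg x')
      (beta_lt_one hs hb x')]
    unfold vr
    constructor
    · intro h
      rcases eq_or_lt_of_le h with hh | hh
      · exact Or.inr ⟨hh, hlt⟩
      · exact Or.inl hh
    · rintro (h | ⟨h, _⟩)
      · exact le_of_lt h
      · exact le_of_eq h
  · exact absurd heq hxx'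
  · -- descending labels
    have hnot : ¬ (x < x') := not_lt_of_gt hgt
    have hiff1 : ((x < x' ∧ (b x' : ℚ) / (s x' : ℚ) < (b x : ℚ) / (s x : ℚ)) ∨
        (x' < x ∧ (b x' : ℚ) / (s x' : ℚ) ≤ (b x : ℚ) / (s x : ℚ))) ↔
        ((b x' : ℚ) / (s x' : ℚ) ≤ (b x : ℚ) / (s x : ℚ)) := by
      constructor
      · rintro (⟨h, _⟩ | ⟨_, h⟩)
        · exact absurd h hnot
        · exact h
      · intro h; exact Or.inr ⟨hgt, h⟩
    rw [if_congr hiff1 rfl rfl]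
    rw [hXx, hXx']
    rw [rat_desc (beta_nonneg x) (beta_lt_one hs hb x) (beta_nonneg x')
      (beta_lt_one hs hb x')]
    unfold vr
    constructor
    · intro h
      exact Or.inl h
    · rintro (h | ⟨h, hcc⟩)
      · exact h
      · exact absurd hcc (not_lt_of_gt hgt)

/-- Full translation: Adj w.r.t. `D4` is equivalent to lex-sortedness plus boundary
conditions. -/
lemma adj_sort (hp : 0 < p) {s b : Fin p → ℕ} (hs : ∀ z, 0 < s z) (hb : ∀ z, b z < s z)
    (π : Equiv.Perm (Fin p)) (d : XYT p →₀ ℕ) :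
    Adj hp π (D4 hp s π b) d ↔
      ((∀ m : ℕ, ∀ hm : m + 1 < p,
          keyf s b d (π ⟨m, by omega⟩) < keyf s b d (π ⟨m + 1, hm⟩)) ∧
        (0 : ℚ) < vr s b d (π ⟨0, hp⟩) ∧
        vr s b d (π ⟨p - 1, Nat.sub_lt hp Nat.one_pos⟩) ≤ (d (Sum.inr ()) : ℚ)) := by
  unfold Adj
  have hc1 : ((if 0 ∈ D4 hp s π b then 1 else 0) ≤ hX π d ⟨0, hp⟩) ↔
      (0 : ℚ) < vr s b d (π ⟨0, hp⟩) := by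
    rw [if_congr (zero_mem_D4 hp s π (fun z => b z)) rfl rfl]
    exact rat_zero (beta_nonneg _) (beta_eq_zero_iff hs _)
  have hc3 : (hX π d ⟨p - 1, Nat.sub_lt hp Nat.one_pos⟩ +
        (if p ∈ D4 hp s π b then 1 else 0) ≤ d (Sum.inr ())) ↔
      vr s b d (π ⟨p - 1, Nat.sub_lt hp Nat.one_pos⟩) ≤ (d (Sum.inr ()) : ℚ) := by
    rw [if_congr (p_mem_D4 hp s π (fun z => b z)) rfl rfl]
    exact rat_end (beta_lt_one hs hb _) (beta_nonneg _) (beta_eq_zero_iff hs _)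
  rw [hc1, hc3]
  constructor
  · rintro ⟨h1, h2, h3⟩
    exact ⟨fun m hm => (step_iff hp hs hb π d m hm).1 (h2 m hm), h1, h3⟩
  · rintro ⟨h2, h1, h3⟩
    exact ⟨h1, fun m hm => (step_iff hp hs hb π d m hm).2 (h2 m hm), h3⟩

lemma strictMono_of_adj {α : Type*} [Preorder α] {f : Fin p → α}
    (h : ∀ m : ℕ, ∀ hm : m + 1 < p, f ⟨m, by omega⟩ < f ⟨m + 1, hm⟩) : StrictMono f := by
  have key : ∀ j : ℕ, ∀ hj : j < p, ∀ i : ℕ, ∀ hi : i < p, i < j →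
      f ⟨i, hi⟩ < f ⟨j, hj⟩ := by
    intro j
    induction j with
    | zero => intro _ i _ hij; omega
    | succ j ih =>
      intro hj i hi hij
      rcases Nat.lt_or_ge i j with hlt | hge
      · exact lt_trans (ih (by omega) i hi hlt) (h j hj)
      · have : i = j := by omega
        subst this
        exact h i hj
  intro i j hij
  have h1 : (i : ℕ) < (j : ℕ) := hij
  have := key (j : ℕ) j.isLt (i : ℕ) i.isLt h1
  simpa [Fin.eta] using this

lemma sort_unique (s b : Fin p → ℕ) (d : XYT p →₀ ℕ) {π π' : Equiv.Perm (Fin p)}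
    (h : StrictMono (fun i => keyf s b d (π i)))
    (h' : StrictMono (fun i => keyf s b d (π' i))) : π = π' := by
  classical
  set S : Finset (Lex (ℚ × Fin p)) := Finset.univ.image (keyf s b d) with hS
  have hcard : S.card = p := by
    rw [hS, Finset.card_image_of_injective _ (keyf_inj s b d), Finset.card_univ,
      Fintype.card_fin]
  have e1 := Finset.orderEmbOfFin_unique hcard
    (f := fun i => keyf s b d (π i))
    (fun i => Finset.mem_image_of_mem _ (Finset.mem_univ _)) h
  have e2 := Finset.orderEmbOfFin_unique hcard
    (f := fun i => keyf s b d (π' i))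
    (fun i => Finset.mem_image_of_mem _ (Finset.mem_univ _)) h'
  apply Equiv.ext
  intro i
  exact keyf_inj s b d (by rw [congrFun e1 i, congrFun e2 i])

lemma sort_exists (s b : Fin p → ℕ) (d : XYT p →₀ ℕ) :
    ∃ π : Equiv.Perm (Fin p), StrictMono (fun i => keyf s b d (π i)) := by
  classical
  set S : Finset (Lex (ℚ × Fin p)) := Finset.univ.image (keyf s b d) with hS
  have hcard : S.card = p := by
    rw [hS, Finset.card_image_of_injective _ (keyf_inj s b d), Finset.card_univ,
      Fintype.card_fin]
  set F := S.orderEmbOfFin hcard with hF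
  have hmem : ∀ i : Fin p, ∃ z : Fin p, keyf s b d z = F i := by
    intro i
    have h1 : F i ∈ S := Finset.orderEmbOfFin_mem S hcard i
    rw [hS, Finset.mem_image] at h1
    obtain ⟨z, _, hz⟩ := h1
    exact ⟨z, hz⟩
  choose g hg using hmem
  have hginj : Function.Injective g := by
    intro i j hij
    have : F i = F j := by rw [← hg i, ← hg j, hij]
    exact F.injective this
  have hgbij : Function.Bijective g := Finite.injective_iff_bijective.mp hginj
  refine ⟨Equiv.ofBijective g hgbij, ?_⟩
  have he : (fun i => keyf s b d (Equiv.ofBijective g hgbij i)) = fun i => F i :=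
    funext fun i => hg i
  rw [he]
  exact F.strictMono

end LH
namespace LH

variable {p : ℕ}

/-- sortedness plus boundary conditions. -/
def SortedAll (hp : 0 < p) (s b : Fin p → ℕ) (d : XYT p →₀ ℕ)
    (π : Equiv.Perm (Fin p)) : Prop :=
  (∀ m : ℕ, ∀ hm : m + 1 < p,
    keyf s b d (π ⟨m, by omega⟩) < keyf s b d (π ⟨m + 1, hm⟩)) ∧
  (0 : ℚ) < vr s b d (π ⟨0, hp⟩) ∧
  vr s b d (π ⟨p - 1, Nat.sub_lt hp Nat.one_pos⟩) ≤ (d (Sum.inr ()) : ℚ)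

lemma adj_sort' (hp : 0 < p) {s b : Fin p → ℕ} (hs : ∀ z, 0 < s z) (hb : ∀ z, b z < s z)
    (π : Equiv.Perm (Fin p)) (d : XYT p →₀ ℕ) :
    Adj hp π (D4 hp s π b) d ↔ SortedAll hp s b d π :=
  adj_sort hp hs hb π d

/-- The candidate partition determined by `d`. -/
def fzero (s b : Fin p → ℕ) (d : XYT p →₀ ℕ) (z : Fin p) : ℕ :=
  d (Sum.inl (Sum.inl z)) * s z + b z

lemma vr_eq {s b : Fin p → ℕ} (hs : ∀ z, 0 < s z) (d : XYT p →₀ ℕ) (z : Fin p) :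
    (fzero s b d z : ℚ) / (s z : ℚ) = vr s b d z := by
  unfold fzero vr
  have hsz : (s z : ℚ) ≠ 0 := Nat.cast_ne_zero.mpr (hs z).ne'
  push_cast
  field_simp

lemma keyf_lt_iff (s b : Fin p → ℕ) (d : XYT p →₀ ℕ) (z w : Fin p) :
    keyf s b d z < keyf s b d w ↔
      (vr s b d z < vr s b d w ∨ (vr s b d z = vr s b d w ∧ z < w)) := by
  unfold keyf
  rw [lex_lt_iff]

section Main

variable {s b : Fin p → ℕ} {lt' le' : Fin p → Fin p → Prop}

/-- (A): a sorted linear extension witnesses validity. -/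
lemma lemA (hp : 0 < p) (hs : ∀ z, 0 < s z) (hb : ∀ z, b z < s z) (d : XYT p →₀ ℕ)
    {π : Equiv.Perm (Fin p)}
    (hlin : ∀ i j, le' (π i) (π j) → i ≤ j)
    (hlt_le : ∀ x y, lt' x y → le' x y) (hlt_ne : ∀ x y, lt' x y → x ≠ y)
    (hS : SortedAll hp s b d π) :
    (∀ x y, lt' x y →
        (fzero s b d x : ℚ) / (s x : ℚ) ≤ (fzero s b d y : ℚ) / (s y : ℚ)) ∧
    (∀ x y, lt' x y → y < x →
        (fzero s b d x : ℚ) / (s x : ℚ) < (fzero s b d y : ℚ) / (s y : ℚ)) ∧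
    (∀ z, 0 < fzero s b d z) ∧
    (∀ z, (fzero s b d z : ℚ) / (s z : ℚ) ≤ (d (Sum.inr ()) : ℚ)) := by
  have hsm : StrictMono (fun i => keyf s b d (π i)) := strictMono_of_adj hS.1
  have vmono : ∀ i j : Fin p, i ≤ j → vr s b d (π i) ≤ vr s b d (π j) := by
    intro i j hij
    rcases eq_or_lt_of_le hij with rfl | hlt
    · exact le_rfl
    · have := hsm hlt
      rw [keyf_lt_iff] at this
      rcases this with h | ⟨h, _⟩
      · exact le_of_lt h
      · exact le_of_eq h
  have hvpos : ∀ z : Fin p, (0 : ℚ) < vr s b d z := by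
    intro z
    have h1 : (⟨0, hp⟩ : Fin p) ≤ π.symm z := by
      simp only [Fin.le_def, Fin.val_mk]; omega
    have h2 := vmono _ _ h1
    rw [Equiv.apply_symm_apply] at h2
    exact lt_of_lt_of_le hS.2.1 h2
  have hvbound : ∀ z : Fin p, vr s b d z ≤ (d (Sum.inr ()) : ℚ) := by
    intro z
    have h1 : π.symm z ≤ (⟨p - 1, Nat.sub_lt hp Nat.one_pos⟩ : Fin p) := by
      rw [Fin.le_def]
      have := (π.symm z).isLt
      simp only [Fin.val_mk]
      omega
    have h2 := vmono _ _ h1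
    rw [Equiv.apply_symm_apply] at h2
    exact le_trans h2 hS.2.2
  have hidx : ∀ x y : Fin p, lt' x y → π.symm x < π.symm y := by
    intro x y hxy
    have h1 : π.symm x ≤ π.symm y := by
      apply hlin
      rw [Equiv.apply_symm_apply, Equiv.apply_symm_apply]
      exact hlt_le x y hxy
    have hne : x ≠ y := hlt_ne x y hxy
    rcases eq_or_lt_of_le h1 with heq | hlt
    · exact absurd (by rw [← Equiv.apply_symm_apply π x, ← Equiv.apply_symm_apply π y, heq])
        hne
    · exact hlt
  refine ⟨?_, ?_, ?_, ?_⟩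
  · intro x y hxy
    rw [vr_eq hs, vr_eq hs]
    have := vmono _ _ (le_of_lt (hidx x y hxy))
    rwa [Equiv.apply_symm_apply, Equiv.apply_symm_apply] at this
  · intro x y hxy hyx
    rw [vr_eq hs, vr_eq hs]
    have := hsm (hidx x y hxy)
    rw [keyf_lt_iff, Equiv.apply_symm_apply, Equiv.apply_symm_apply] at this
    rcases this with h | ⟨_, hcc⟩
    · exact h
    · exact absurd hcc (not_lt_of_gt hyx)
  · intro z
    have h1 := hvpos z
    rw [← vr_eq hs] at h1
    by_contra hc
    push_neg at hc
    have h2 : fzero s b d z = 0 := by omega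
    rw [h2] at h1
    norm_num at h1
  · intro z
    rw [vr_eq hs]
    exact hvbound z

/-- (B): validity yields a sorted linear extension. -/
lemma lemB (hp : 0 < p) (hs : ∀ z, 0 < s z) (hb : ∀ z, b z < s z) (d : XYT p →₀ ℕ)
    (hLH1 : ∀ x y, lt' x y →
      (fzero s b d x : ℚ) / (s x : ℚ) ≤ (fzero s b d y : ℚ) / (s y : ℚ))
    (hLH2 : ∀ x y, lt' x y → y < x →
      (fzero s b d x : ℚ) / (s x : ℚ) < (fzero s b d y : ℚ) / (s y : ℚ))
    (hpos : ∀ z, 0 < fzero s b d z)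
    (hbound : ∀ z, (fzero s b d z : ℚ) / (s z : ℚ) ≤ (d (Sum.inr ()) : ℚ))
    (hle_lt : ∀ x y, le' x y → x ≠ y → lt' x y)
    (hlt_ne : ∀ x y, lt' x y → x ≠ y) :
    ∃ π : Equiv.Perm (Fin p),
      (∀ i j, le' (π i) (π j) → i ≤ j) ∧ SortedAll hp s b d π := by
  obtain ⟨π, hsm⟩ := sort_exists s b d
  have hvpos : ∀ z : Fin p, (0 : ℚ) < vr s b d z := by
    intro z
    rw [← vr_eq hs]
    apply div_pos
    · exact_mod_cast hpos z
    · exact_mod_cast hs z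
  have hPk : ∀ x y : Fin p, lt' x y → keyf s b d x < keyf s b d y := by
    intro x y hxy
    rw [keyf_lt_iff]
    have h1 : vr s b d x ≤ vr s b d y := by
      rw [← vr_eq hs, ← vr_eq hs]
      exact hLH1 x y hxy
    rcases eq_or_lt_of_le h1 with heq | hlt
    · have hne : x ≠ y := hlt_ne x y hxy
      rcases lt_trichotomy x y with hl | he | hg
      · exact Or.inr ⟨heq, hl⟩
      · exact absurd he hne
      · exfalso
        have := hLH2 x y hxy hg
        rw [vr_eq hs, vr_eq hs] at this
        exact absurd heq (ne_of_lt this)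
    · exact Or.inl hlt
  refine ⟨π, ?_, ?_, ?_, ?_⟩
  · intro i j hij
    by_contra hc
    push_neg at hc
    have h1 : keyf s b d (π j) < keyf s b d (π i) := hsm hc
    have hne : π i ≠ π j := by
      intro he
      have := π.injective he
      omega
    have h2 : lt' (π i) (π j) := hle_lt _ _ hij hne
    have h3 := hPk _ _ h2
    rw [keyf_lt_iff] at h1 h3
    rcases h1 with ha | ⟨ha, ha2⟩ <;> rcases h3 with hc' | ⟨hc', hc2'⟩
    · linarith
    · linarith
    · linarith
    · exact absurd (ha2.trans hc2') (lt_irrefl (π j))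
  · intro m hm
    exact hsm (by rw [Fin.lt_def]; simp)
  · exact hvpos _
  · rw [← vr_eq hs]
    exact hbound _

/-- (C): uniqueness of the sorted permutation. -/
lemma lemC (hp : 0 < p) {d : XYT p →₀ ℕ} {π π' : Equiv.Perm (Fin p)}
    (h : SortedAll hp s b d π) (h' : SortedAll hp s b d π') : π = π' :=
  sort_unique s b d (strictMono_of_adj h.1) (strictMono_of_adj h'.1)

end Main

end LH

open LH in
/-- `∑_{n ≥ 0} F⁺_{(P,s)}(x,y;n) t^n = ∑_{τ=(π,r) ∈ L(P,s)} y^r ∏_{i ∈ D₄(τ)} x_{π_{i+1}} ⋯ x_{π_p}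
· t^{|D₄(τ)|} / ((1-t) ∏_{i ∈ [p]} (1 - x_{π_i} ⋯ x_{π_p} t))`. The left-hand side is described
coefficientwise: at a monomial `d`, letting `n = d(t)`, the coefficient counts the
positive `f ∈ ℤ₊(P,s)` with `f(x)/s(x) ≤ n` whose exponent vectors match `d`. -/
theorem sum_Fplus_n_eq_sum_over_colored_linear_extensions {p : ℕ} (hp : 0 < p)
    (P : PartialOrder (Fin p)) (s : Fin p → ℕ) (hs : ∀ x, 0 < s x) :
    ∀ d : XYT p →₀ ℕ,
      MvPowerSeries.coeff d
          (∑ τ ∈ LPs P s,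
            yprod (fun x => (τ.2 x : ℕ)) *
              (∏ i ∈ D4 hp s τ.1 fun x => (τ.2 x : ℕ), xprod τ.1 i) *
              tvar p ^ (D4 hp s τ.1 fun x => (τ.2 x : ℕ)).card *
              (1 - tvar p)⁻¹ *
              ∏ i : Fin p, (1 - xprod τ.1 (i : ℕ) * tvar p)⁻¹) =
        (Set.ncard {f : Fin p → ℕ | IsLHPart P s f ∧ (∀ x, 0 < f x) ∧
          (∀ x, (f x : ℚ) / (s x : ℚ) ≤ (d (Sum.inr ()) : ℚ)) ∧
          ∀ x, f x / s x = d (Sum.inl (Sum.inl x)) ∧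
            f x % s x = d (Sum.inl (Sum.inr x))} : ℚ) := by
  classical
  intro d
  set b : Fin p → ℕ := fun z => d (Sum.inl (Sum.inr z)) with hbdef
  rw [map_sum]
  rw [Finset.sum_congr rfl (fun τ _ =>
    coeff_full τ.1 (fun z => (τ.2 z : ℕ)) (D4 hp s τ.1 fun x => (τ.2 x : ℕ)) d)]
  have hiff : ∀ τ : Equiv.Perm (Fin p) × (∀ x : Fin p, Fin (s x)),
      ((eM τ.1 (fun z => (τ.2 z : ℕ)) (D4 hp s τ.1 fun x => (τ.2 x : ℕ)) ≤ d ∧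
        Cnd τ.1 p (d - eM τ.1 (fun z => (τ.2 z : ℕ))
          (D4 hp s τ.1 fun x => (τ.2 x : ℕ)))) ↔
      ((∀ z : Fin p, ((τ.2 z : ℕ)) = b z) ∧ SortedAll hp s b d τ.1)) := by
    intro τ
    rw [adj_iff hp τ.1 (fun z => (τ.2 z : ℕ)) _
      (D4_le hp s τ.1 (fun z => (τ.2 z : ℕ))) d]
    constructor
    · rintro ⟨h1, h2⟩
      have hr : (fun z => (τ.2 z : ℕ)) = b := funext fun z => (h1 z).symm
      refine ⟨fun z => (h1 z).symm, ?_⟩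
      rw [← hr]
      exact (adj_sort' hp hs (fun z => (τ.2 z).isLt) τ.1 d).1 h2
    · rintro ⟨h1, h2⟩
      have hr : (fun z => (τ.2 z : ℕ)) = b := funext h1
      refine ⟨fun z => (h1 z).symm, ?_⟩
      apply (adj_sort' hp hs (fun z => (τ.2 z).isLt) τ.1 d).2
      rw [hr]
      exact h2
  rw [Finset.sum_congr rfl (fun τ _ => if_congr (hiff τ) rfl rfl)]
  by_cases hball : ∀ z : Fin p, b z < s z
  · -- the remainders fit
    set r₀ : ∀ z : Fin p, Fin (s z) := fun z => ⟨b z, hball z⟩ with hr₀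
    have hQr : ∀ τ : Equiv.Perm (Fin p) × (∀ x : Fin p, Fin (s x)),
        (∀ z : Fin p, ((τ.2 z : ℕ)) = b z) ↔ τ.2 = r₀ := by
      intro τ
      constructor
      · intro h
        funext z
        exact Fin.ext (h z)
      · intro h z
        rw [h]
    set f₀ : Fin p → ℕ := fzero s b d with hf₀
    have hdiv : ∀ z : Fin p, f₀ z / s z = d (Sum.inl (Sum.inl z)) ∧ f₀ z % s z = b z := by
      intro z
      unfold f₀
      unfold fzero
      constructor
      · rw [Nat.add_comm, Nat.mul_comm, Nat.add_mul_div_left _ _ (hs z),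
          Nat.div_eq_of_lt (hball z), Nat.zero_add]
      · rw [Nat.add_comm, Nat.add_mul_mod_self_right, Nat.mod_eq_of_lt (hball z)]
    have hfeq : ∀ f : Fin p → ℕ,
        (∀ x, f x / s x = d (Sum.inl (Sum.inl x)) ∧ f x % s x = d (Sum.inl (Sum.inr x))) →
        f = f₀ := by
      intro f hf
      funext z
      have h3 := (Nat.div_add_mod (f z) (s z)).symm
      rw [(hf z).1, (hf z).2] at h3
      unfold f₀
      unfold fzero
      rw [h3, Nat.mul_comm]
    by_cases hval : IsLHPart P s f₀ ∧ (∀ z, 0 < f₀ z) ∧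
        (∀ z, (f₀ z : ℚ) / (s z : ℚ) ≤ (d (Sum.inr ()) : ℚ))
    · -- valid case
      obtain ⟨π₀, hπlin, hπS⟩ := lemB (lt' := P.lt) (le' := P.le) hp hs hball d
        hval.1.1 hval.1.2 hval.2.1 hval.2.2
        (fun x y h hn => @lt_of_le_of_ne _ P x y h hn)
        (fun x y h => @ne_of_lt _ P.toPreorder x y h)
      have hsum : ∀ τ ∈ LPs P s,
          (if ((∀ z : Fin p, ((τ.2 z : ℕ)) = b z) ∧ SortedAll hp s b d τ.1)
            then (1 : ℚ) else 0) =
          if τ = (π₀, r₀) then (1 : ℚ) else 0 := by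
        intro τ _
        apply if_congr _ rfl rfl
        constructor
        · rintro ⟨h1, h2⟩
          have : τ.1 = π₀ := lemC hp h2 hπS
          exact Prod.ext this ((hQr τ).1 h1)
        · rintro rfl
          exact ⟨fun z => rfl, hπS⟩
      rw [Finset.sum_congr rfl hsum, Finset.sum_ite_eq' (LPs P s) (π₀, r₀) (fun _ => (1 : ℚ))]
      have hmem : (π₀, r₀) ∈ LPs P s := by
        rw [LPs, Finset.mem_filter]
        exact ⟨Finset.mem_univ _, hπlin⟩
      rw [if_pos hmem]
      have hset : {f : Fin p → ℕ | IsLHPart P s f ∧ (∀ x, 0 < f x) ∧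
          (∀ x, (f x : ℚ) / (s x : ℚ) ≤ (d (Sum.inr ()) : ℚ)) ∧
          ∀ x, f x / s x = d (Sum.inl (Sum.inl x)) ∧
            f x % s x = d (Sum.inl (Sum.inr x))} = {f₀} := by
        apply Set.eq_singleton_iff_unique_mem.mpr
        constructor
        · exact ⟨hval.1, hval.2.1, hval.2.2, fun z => ⟨(hdiv z).1, (hdiv z).2⟩⟩
        · intro f hf
          exact hfeq f hf.2.2.2
      rw [hset, Set.ncard_singleton, Nat.cast_one]
    · -- invalid case
      rw [Finset.sum_eq_zero]
      · have hset : {f : Fin p → ℕ | IsLHPart P s f ∧ (∀ x, 0 < f x) ∧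
            (∀ x, (f x : ℚ) / (s x : ℚ) ≤ (d (Sum.inr ()) : ℚ)) ∧
            ∀ x, f x / s x = d (Sum.inl (Sum.inl x)) ∧
              f x % s x = d (Sum.inl (Sum.inr x))} = ∅ := by
          rw [Set.eq_empty_iff_forall_notMem]
          intro f hf
          have : f = f₀ := hfeq f hf.2.2.2
          subst this
          exact hval ⟨hf.1, hf.2.1, hf.2.2.1⟩
        rw [hset, Set.ncard_empty, Nat.cast_zero]
      · intro τ hτ
        rw [if_neg]
        rintro ⟨h1, h2⟩
        have hτlin : τ.1 ∈ LinExt P := by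
          rw [LPs, Finset.mem_filter] at hτ
          exact hτ.2
        have hA := lemA (lt' := P.lt) (le' := P.le) hp hs hball d hτlin
          (fun x y h => @le_of_lt _ P.toPreorder x y h)
          (fun x y h => @ne_of_lt _ P.toPreorder x y h) h2
        exact hval ⟨⟨hA.1, hA.2.1⟩, hA.2.2.1, hA.2.2.2⟩
  · -- some remainder does not fit: both sides vanish
    push_neg at hball
    obtain ⟨z0, hz0⟩ := hball
    rw [Finset.sum_eq_zero]
    · have hset : {f : Fin p → ℕ | IsLHPart P s f ∧ (∀ x, 0 < f x) ∧
          (∀ x, (f x : ℚ) / (s x : ℚ) ≤ (d (Sum.inr ()) : ℚ)) ∧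
          ∀ x, f x / s x = d (Sum.inl (Sum.inl x)) ∧
            f x % s x = d (Sum.inl (Sum.inr x))} = ∅ := by
        rw [Set.eq_empty_iff_forall_notMem]
        intro f hf
        have h1 := (hf.2.2.2 z0).2
        have h2 := Nat.mod_lt (f z0) (hs z0)
        rw [h1] at h2
        have hz0' : s z0 ≤ d (Sum.inl (Sum.inr z0)) := hz0
        omega
      rw [hset, Set.ncard_empty, Nat.cast_zero]
    · intro τ _
      rw [if_neg]
      rintro ⟨h1, _⟩
      have := (τ.2 z0).isLt
      rw [h1 z0] at this
      exact absurd this (by omega)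
end
end

section
/- Let P be the anti-chain on [p] (no two distinct elements comparable) and s : [p] → ℤ₊. Then, as formal power series in t with coefficients in the polynomial ring in x₁,…,x_p, y₁,…,y_p, one has ∑_{n≥0} (∏_{i=1}^p (x_i^n + [n]_{x_i}[s(i)]_{y_i})) t^n = ∑_{τ=(π,r) ∈ L(P,s)} y^r · (∏_{i ∈ D(τ)} x_{π_{i+1}} ⋯ x_{π_p}) · t^{|D(τ)|} · (1−t)^{−1} · ∏_{i ∈ [p]} (1 − x_{π_i} ⋯ x_{π_p} t)^{−1}, where L(P,s) consists of all pairs (π,r) with π ∈ S_p and r : [p] → ℕ, 0 ≤ r(x) < s(x). -/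
open scoped Classical

noncomputable section

/-- The anti-chain order on `Fin p`: no two distinct elements are comparable. -/
def antichainOrder (p : ℕ) : PartialOrder (Fin p) where
  le a b := a = b
  lt _ _ := False
  le_refl _ := rfl
  le_trans _ _ _ h1 h2 := Eq.trans h1 h2
  le_antisymm _ _ h _ := h
  lt_iff_le_not_ge _ _ :=
    ⟨fun h => h.elim, fun ⟨h1, h2⟩ => absurd h1.symm h2⟩

namespace AG
open MvPowerSeries Finset

variable {p : ℕ}

def xv (i : Fin p) : XYT p := Sum.inl (Sum.inl i)
def yv (i : Fin p) : XYT p := Sum.inl (Sum.inr i)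
def tv : XYT p := Sum.inr ()

lemma xv_inj : Function.Injective (xv (p := p)) := by
  intro a b h; simpa [xv] using h

@[simp] lemma xv_ne_tv (i : Fin p) : xv i ≠ tv := by simp [xv, tv]
@[simp] lemma xv_ne_yv (i j : Fin p) : xv i ≠ yv j := by simp [xv, yv]
@[simp] lemma yv_ne_tv (i : Fin p) : yv i ≠ tv := by simp [yv, tv]
@[simp] lemma xv_eq_xv_iff (i j : Fin p) : xv i = xv j ↔ i = j := by simp [xv]
@[simp] lemma yv_eq_yv_iff (i j : Fin p) : yv i = yv j ↔ i = j := by simp [yv]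

/-- product of monomials with coefficient 1 -/
lemma prod_monomial {σ : Type*} {ι : Type*} (F : Finset ι) (m : ι → (σ →₀ ℕ)) :
    (∏ j ∈ F, MvPowerSeries.monomial (R := ℚ) (m j) 1) =
      MvPowerSeries.monomial (R := ℚ) (∑ j ∈ F, m j) 1 := by
  classical
  induction F using Finset.induction_on with
  | empty => simp [MvPowerSeries.monomial_zero_one]
  | insert _ _ h ih =>
      rw [Finset.prod_insert h, Finset.sum_insert h, ih, monomial_mul_monomial, one_mul]

/-- the exponent finsupp of `xprod π i` -/
def muX (π : Equiv.Perm (Fin p)) (i : ℕ) : XYT p →₀ ℕ :=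
  ∑ j ∈ Finset.univ.filter fun j : Fin p => i ≤ (j : ℕ), Finsupp.single (xv (π j)) 1

lemma xprod_eq (π : Equiv.Perm (Fin p)) (i : ℕ) :
    xprod π i = MvPowerSeries.monomial (R := ℚ) (muX π i) 1 := by
  rw [xprod, muX, ← prod_monomial]
  rfl

@[simp] lemma muX_x (π : Equiv.Perm (Fin p)) (i : ℕ) (a : Fin p) :
    muX π i (xv (π a)) = if i ≤ (a : ℕ) then 1 else 0 := by
  simp only [muX, Finsupp.finset_sum_apply, Finsupp.single_apply, xv_eq_xv_iff,
    EmbeddingLike.apply_eq_iff_eq]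
  rw [Finset.sum_ite_eq']
  simp

@[simp] lemma muX_y (π : Equiv.Perm (Fin p)) (i : ℕ) (a : Fin p) :
    muX π i (yv a) = 0 := by
  rw [muX, Finsupp.finset_sum_apply]
  refine Finset.sum_eq_zero fun b _ => ?_
  rw [Finsupp.single_apply, if_neg (xv_ne_yv _ _)]

@[simp] lemma muX_t (π : Equiv.Perm (Fin p)) (i : ℕ) :
    muX π i (tv) = 0 := by
  rw [muX, Finsupp.finset_sum_apply]
  refine Finset.sum_eq_zero fun b _ => ?_
  rw [Finsupp.single_apply, if_neg (xv_ne_tv _)]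

lemma tvar_eq : tvar p = MvPowerSeries.monomial (R := ℚ) (Finsupp.single tv 1) 1 := rfl

lemma tvar_pow (k : ℕ) :
    tvar p ^ k = MvPowerSeries.monomial (R := ℚ) (Finsupp.single tv k) 1 :=
  MvPowerSeries.X_pow_eq _ k

/-- the exponent finsupp of `yprod r` -/
def muY (r : Fin p → ℕ) : XYT p →₀ ℕ := ∑ x : Fin p, Finsupp.single (yv x) (r x)

lemma yprod_eq (r : Fin p → ℕ) :
    yprod r = MvPowerSeries.monomial (R := ℚ) (muY r) 1 := by
  rw [yprod, muY, ← prod_monomial]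
  refine Finset.prod_congr rfl fun x _ => ?_
  rw [Finsupp.single, MvPowerSeries.X_pow_eq]
  rfl

@[simp] lemma muY_x (r : Fin p → ℕ) (a : Fin p) : muY r (xv a) = 0 := by
  rw [muY, Finsupp.finset_sum_apply]
  exact Finset.sum_eq_zero fun b _ => by
    rw [Finsupp.single_apply, if_neg (Ne.symm (xv_ne_yv _ _))]

@[simp] lemma muY_y (r : Fin p → ℕ) (a : Fin p) : muY r (yv a) = r a := by
  rw [muY, Finsupp.finset_sum_apply, Finset.sum_eq_single a]
  · simp
  · intro b _ hb
    rw [Finsupp.single_apply, if_neg (by simpa using hb)]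
  · simp

@[simp] lemma muY_t (r : Fin p → ℕ) : muY r (tv) = 0 := by
  rw [muY, Finsupp.finset_sum_apply]
  exact Finset.sum_eq_zero fun b _ => by
    rw [Finsupp.single_apply, if_neg (yv_ne_tv _)]

end AG
namespace AG
open MvPowerSeries Finset

variable {p : ℕ}

@[simp] lemma single_tv_x (c : ℕ) (a : Fin p) :
    (Finsupp.single tv c : XYT p →₀ ℕ) (xv a) = 0 :=
  Finsupp.single_eq_of_ne' (Ne.symm (xv_ne_tv a))

@[simp] lemma single_tv_y (c : ℕ) (a : Fin p) :
    (Finsupp.single tv c : XYT p →₀ ℕ) (yv a) = 0 :=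
  Finsupp.single_eq_of_ne' (Ne.symm (yv_ne_tv a))

@[simp] lemma single_tv_t (c : ℕ) :
    (Finsupp.single tv c : XYT p →₀ ℕ) tv = c :=
  Finsupp.single_eq_same

/-- Chain condition at position `l`. -/
def chain (π : Equiv.Perm (Fin p)) (d : XYT p →₀ ℕ) (l : Fin p) : Prop :=
  if h : (l : ℕ) + 1 < p then d (xv (π l)) ≤ d (xv (π ⟨(l : ℕ) + 1, h⟩))
  else d (xv (π l)) ≤ d tv

/-- The indicator predicate for `G π j`. -/
def P (π : Equiv.Perm (Fin p)) (j : ℕ) (d : XYT p →₀ ℕ) : Prop :=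
  (∀ x, d (yv x) = 0) ∧ (∀ l : Fin p, (l : ℕ) < j → d (xv (π l)) = 0) ∧
  ∀ l : Fin p, j ≤ (l : ℕ) → chain π d l

def G (π : Equiv.Perm (Fin p)) (j : ℕ) : MvPowerSeries (XYT p) ℚ :=
  fun d => if P π j d then 1 else 0

lemma coeff_G (π : Equiv.Perm (Fin p)) (j : ℕ) (d : XYT p →₀ ℕ) :
    MvPowerSeries.coeff d (G π j) = if P π j d then 1 else 0 := rfl

lemma mono_of_chains {π : Equiv.Perm (Fin p)} {d : XYT p →₀ ℕ} {j : ℕ}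
    (h : ∀ l : Fin p, j ≤ (l : ℕ) → chain π d l) :
    ∀ l l' : Fin p, j ≤ (l : ℕ) → (l : ℕ) ≤ (l' : ℕ) → d (xv (π l)) ≤ d (xv (π l')) := by
  suffices H : ∀ k, ∀ l l' : Fin p, j ≤ (l : ℕ) → (l' : ℕ) = (l : ℕ) + k →
      d (xv (π l)) ≤ d (xv (π l')) by
    intro l l' hj hle
    exact H ((l' : ℕ) - (l : ℕ)) l l' hj (by omega)
  intro k
  induction k with
  | zero =>
    intro l l' _ hl'
    have : l' = l := Fin.ext (by omega)
    rw [this]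
  | succ k ih =>
    intro l l' hj hl'
    have hlt : (l : ℕ) + k + 1 < p := by omega
    have hmid : ((⟨(l : ℕ) + k, by omega⟩ : Fin p) : ℕ) = (l : ℕ) + k := rfl
    have h1 := ih l ⟨(l : ℕ) + k, by omega⟩ hj rfl
    have h2 := h ⟨(l : ℕ) + k, by omega⟩ (by simp; omega)
    rw [chain, dif_pos hlt] at h2
    have : l' = (⟨(l : ℕ) + k + 1, hlt⟩ : Fin p) := Fin.ext (by simp; omega)
    rw [this]
    exact le_trans h1 h2

lemma le_t_of_chains {π : Equiv.Perm (Fin p)} {d : XYT p →₀ ℕ} {j : ℕ}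
    (h : ∀ l : Fin p, j ≤ (l : ℕ) → chain π d l) :
    ∀ l : Fin p, j ≤ (l : ℕ) → d (xv (π l)) ≤ d tv := by
  intro l hj
  have hlast : (p - 1 : ℕ) < p := by omega
  have h1 : d (xv (π l)) ≤ d (xv (π ⟨p - 1, hlast⟩)) :=
    mono_of_chains h l ⟨p - 1, hlast⟩ hj (by have := l.isLt; simp; omega)
  have h2 := h ⟨p - 1, hlast⟩ (by simp; have := l.isLt; omega)
  rw [chain, dif_neg (by simp; omega)] at h2
  exact le_trans h1 h2

lemma step (π : Equiv.Perm (Fin p)) {j : ℕ} (hj : j < p) :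
    (1 - xprod π j * tvar p) * G π j = G π (j + 1) := by
  ext d
  rw [sub_mul, one_mul, map_sub, xprod_eq, tvar_eq, monomial_mul_monomial, one_mul,
    coeff_monomial_mul]
  simp only [coeff_G]
  set μ : XYT p →₀ ℕ := muX π j + Finsupp.single tv 1 with hμ
  have hμx : ∀ a : Fin p, μ (xv (π a)) = if j ≤ (a : ℕ) then 1 else 0 := by
    intro a; simp [hμ, Finsupp.add_apply]
  have hμy : ∀ a : Fin p, μ (yv a) = 0 := by
    intro a; simp [hμ, Finsupp.add_apply]
  have hμt : μ tv = 1 := by simp [hμ, Finsupp.add_apply]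
  by_cases h0 : d (xv (π ⟨j, hj⟩)) = 0
  · -- case A
    have hnle : ¬ μ ≤ d := by
      intro hle
      have := Finsupp.le_def.mp hle (xv (π ⟨j, hj⟩))
      rw [hμx, if_pos (le_refl j)] at this
      omega
    rw [if_neg hnle, sub_zero]
    refine if_congr ?_ rfl rfl
    constructor
    · rintro ⟨hy, hpre, hch⟩
      refine ⟨hy, ?_, fun l hl => hch l (by omega)⟩
      intro l hl
      rcases Nat.lt_succ_iff_lt_or_eq.mp hl with h | h
      · exact hpre l h
      · have : l = ⟨j, hj⟩ := Fin.ext h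
        rw [this]; exact h0
    · rintro ⟨hy, hpre, hch⟩
      refine ⟨hy, fun l hl => hpre l (by omega), ?_⟩
      intro l hl
      rcases eq_or_lt_of_le hl with h | h
      · have hl0 : d (xv (π l)) = 0 := by
          have : l = ⟨j, hj⟩ := Fin.ext h.symm
          rw [this]; exact h0
        rw [chain]; split <;> simp [hl0]
      · exact hch l (by omega)
  · -- case B
    have hP' : ¬ P π (j + 1) d := by
      rintro ⟨_, hpre, _⟩
      exact h0 (hpre ⟨j, hj⟩ (by simp))
    rw [if_neg hP']
    by_cases hle : μ ≤ d
    · have hle' := Finsupp.le_def.mp hle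
      have hiff : P π j d ↔ P π j (d - μ) := by
        have hx : ∀ a : Fin p, (d - μ) (xv (π a)) =
            d (xv (π a)) - (if j ≤ (a : ℕ) then 1 else 0) := by
          intro a; rw [Finsupp.tsub_apply, hμx]
        have hy : ∀ a : Fin p, (d - μ) (yv a) = d (yv a) := by
          intro a; rw [Finsupp.tsub_apply, hμy]; omega
        have ht : (d - μ) tv = d tv - 1 := by rw [Finsupp.tsub_apply, hμt]
        have hone : ∀ a : Fin p, j ≤ (a : ℕ) → 1 ≤ d (xv (π a)) := by
          intro a ha
          have := hle' (xv (π a)); rw [hμx, if_pos ha] at this; omega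
        have honet : 1 ≤ d tv := by
          have := hle' tv; rw [hμt] at this; omega
        have hchain : ∀ l : Fin p, j ≤ (l : ℕ) → (chain π d l ↔ chain π (d - μ) l) := by
          intro l hl
          rw [chain, chain]
          by_cases hsucc : (l : ℕ) + 1 < p
          · rw [dif_pos hsucc, dif_pos hsucc, hx, hx, if_pos hl,
              if_pos (by simp; omega : j ≤ ((⟨(l : ℕ) + 1, hsucc⟩ : Fin p) : ℕ))]
            have := hone l hl
            have := hone ⟨(l : ℕ) + 1, hsucc⟩ (by simp; omega)
            omega
          · rw [dif_neg hsucc, dif_neg hsucc, hx, if_pos hl, ht]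
            have := hone l hl
            omega
        constructor
        · rintro ⟨h1, h2, h3⟩
          refine ⟨fun x => by rw [hy]; exact h1 x, ?_, fun l hl => (hchain l hl).mp (h3 l hl)⟩
          intro l hl
          rw [hx, if_neg (by omega), h2 l hl]
        · rintro ⟨h1, h2, h3⟩
          refine ⟨fun x => by rw [← hy]; exact h1 x, ?_, fun l hl => (hchain l hl).mpr (h3 l hl)⟩
          intro l hl
          have := h2 l hl
          rw [hx, if_neg (by omega)] at this
          omega
      rw [if_pos hle, one_mul]
      by_cases hPd : P π j d
      · rw [if_pos hPd, if_pos (hiff.mp hPd)]; ring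
      · rw [if_neg hPd, if_neg (fun h => hPd (hiff.mpr h))]; ring
    · rw [if_neg hle, sub_zero, if_neg]
      rintro ⟨hy, hpre, hch⟩
      apply hle
      rw [Finsupp.le_def]
      intro e
      rcases e with (v | v) | u
      · show μ (xv v) ≤ d (xv v)
        have hv : v = π (π.symm v) := (Equiv.apply_symm_apply π v).symm
        rw [hv, hμx]
        split
        · calc 1 ≤ d (xv (π ⟨j, hj⟩)) := by omega
            _ ≤ d (xv (π (π.symm v))) := mono_of_chains hch ⟨j, hj⟩ _ (le_refl j) (by assumption)
        · omega
      · show μ (yv v) ≤ d (yv v)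
        rw [hμy]; omega
      · show μ tv ≤ d tv
        rw [hμt]
        calc 1 ≤ d (xv (π ⟨j, hj⟩)) := by omega
          _ ≤ d tv := le_t_of_chains hch ⟨j, hj⟩ (le_refl j)

end AG
namespace AG
open MvPowerSeries Finset

variable {p : ℕ}

lemma base_case (π : Equiv.Perm (Fin p)) : (1 - tvar p) * G π p = 1 := by
  ext d
  rw [sub_mul, one_mul, map_sub, tvar_eq, coeff_monomial_mul]
  simp only [coeff_G]
  rw [MvPowerSeries.coeff_one]
  have hPfull : ∀ e : XYT p →₀ ℕ, P π p e ↔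
      (∀ x, e (yv x) = 0) ∧ ∀ l : Fin p, e (xv (π l)) = 0 := by
    intro e
    constructor
    · rintro ⟨h1, h2, _⟩; exact ⟨h1, fun l => h2 l l.isLt⟩
    · rintro ⟨h1, h2⟩
      exact ⟨h1, fun l _ => h2 l, fun l hl => absurd l.isLt (by omega)⟩
  by_cases hP : P π p d
  · obtain ⟨hy, hx⟩ := (hPfull d).mp hP
    by_cases ht : d tv = 0
    · have hd0 : d = 0 := by
        ext e
        rcases e with (v | v) | u
        · have : Sum.inl (Sum.inl v) = xv v := rfl
          rw [this]
          have hv : v = π (π.symm v) := (Equiv.apply_symm_apply π v).symm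
          rw [hv]; exact hx _
        · exact hy v
        · exact ht
      rw [if_pos hP, if_neg, sub_zero, if_pos hd0]
      intro hle
      have := Finsupp.le_def.mp hle tv
      rw [single_tv_t] at this
      omega
    · have hle : Finsupp.single tv 1 ≤ d := by
        rw [Finsupp.le_def]
        intro e
        rcases e with (v | v) | u
        · show (Finsupp.single tv 1 : XYT p →₀ ℕ) (xv v) ≤ _; rw [single_tv_x]; omega
        · show (Finsupp.single tv 1 : XYT p →₀ ℕ) (yv v) ≤ _; rw [single_tv_y]; omega
        · show (Finsupp.single tv 1 : XYT p →₀ ℕ) tv ≤ d tv; rw [single_tv_t]; omega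
      have hP2 : P π p (d - Finsupp.single tv 1) := by
        rw [hPfull]
        constructor
        · intro x; rw [Finsupp.tsub_apply, hy, single_tv_y]
        · intro l; rw [Finsupp.tsub_apply, hx, single_tv_x]
      rw [if_pos hP, if_pos hle, one_mul, if_pos hP2, if_neg]
      · ring
      · intro hd0
        rw [hd0] at ht; exact ht rfl
  · have hd0 : d ≠ 0 := by
      intro h
      apply hP
      rw [h, hPfull]
      exact ⟨fun _ => rfl, fun _ => rfl⟩
    rw [if_neg hP, if_neg hd0]
    by_cases hle : Finsupp.single tv 1 ≤ d
    · rw [if_pos hle, one_mul, if_neg]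
      · ring
      · intro hP2
        apply hP
        rw [hPfull] at hP2
        rw [hPfull]
        obtain ⟨h1, h2⟩ := hP2
        constructor
        · intro x
          have := h1 x; rw [Finsupp.tsub_apply, single_tv_y] at this; omega
        · intro l
          have := h2 l; rw [Finsupp.tsub_apply, single_tv_x] at this; omega
    · rw [if_neg hle]; ring

lemma aux_prod (π : Equiv.Perm (Fin p)) :
    ∀ k j, j + k = p →
      (∏ i ∈ Finset.univ.filter fun i : Fin p => j ≤ (i : ℕ),
          (1 - xprod π (i : ℕ) * tvar p)) * G π j = G π p := by
  intro k
  induction k with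
  | zero =>
    intro j hj
    have : (Finset.univ.filter fun i : Fin p => j ≤ (i : ℕ)) = ∅ := by
      rw [Finset.filter_eq_empty_iff]
      intro i _
      have := i.isLt; omega
    have hj' : j = p := by omega
    rw [this, Finset.prod_empty, one_mul, hj']
  | succ k ih =>
    intro j hj
    have hjp : j < p := by omega
    have hsplit : (Finset.univ.filter fun i : Fin p => j ≤ (i : ℕ)) =
        insert ⟨j, hjp⟩ (Finset.univ.filter fun i : Fin p => j + 1 ≤ (i : ℕ)) := by
      ext i
      simp only [Finset.mem_filter, Finset.mem_insert, Finset.mem_univ, true_and]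
      constructor
      · intro h
        rcases eq_or_lt_of_le h with h' | h'
        · left; exact Fin.ext h'.symm
        · right; omega
      · rintro (rfl | h)
        · exact le_refl j
        · omega
    have hnotmem : (⟨j, hjp⟩ : Fin p) ∉
        Finset.univ.filter fun i : Fin p => j + 1 ≤ (i : ℕ) := by simp
    rw [hsplit, Finset.prod_insert hnotmem]
    have : (1 - xprod π ((⟨j, hjp⟩ : Fin p) : ℕ) * tvar p) *
          (∏ i ∈ Finset.univ.filter fun i : Fin p => j + 1 ≤ (i : ℕ),
            (1 - xprod π (i : ℕ) * tvar p)) * G π j =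
        (∏ i ∈ Finset.univ.filter fun i : Fin p => j + 1 ≤ (i : ℕ),
            (1 - xprod π (i : ℕ) * tvar p)) * ((1 - xprod π j * tvar p) * G π j) := by
      ring
    rw [this, step π hjp]
    exact ih (j + 1) (by omega)

lemma Gtot (π : Equiv.Perm (Fin p)) :
    ((1 - tvar p) * ∏ i : Fin p, (1 - xprod π (i : ℕ) * tvar p)) * G π 0 = 1 := by
  have h1 : (Finset.univ.filter fun i : Fin p => 0 ≤ (i : ℕ)) = Finset.univ := by
    simp
  have h2 := aux_prod π p 0 (by omega)
  rw [h1] at h2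
  calc ((1 - tvar p) * ∏ i : Fin p, (1 - xprod π (i : ℕ) * tvar p)) * G π 0
      = (1 - tvar p) * ((∏ i : Fin p, (1 - xprod π (i : ℕ) * tvar p)) * G π 0) := by ring
    _ = (1 - tvar p) * G π p := by rw [h2]
    _ = 1 := base_case π

lemma const_coeff_factor (π : Equiv.Perm (Fin p)) (i : ℕ) :
    constantCoeff (σ := XYT p) (R := ℚ) (1 - xprod π i * tvar p) = 1 := by
  rw [map_sub, map_mul, map_one]
  have : constantCoeff (σ := XYT p) (R := ℚ) (tvar p) = 0 := constantCoeff_X _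
  rw [this, mul_zero, sub_zero]

lemma const_coeff_t : constantCoeff (σ := XYT p) (R := ℚ) (1 - tvar p) = 1 := by
  rw [map_sub, map_one]
  have : constantCoeff (σ := XYT p) (R := ℚ) (tvar p) = 0 := constantCoeff_X _
  rw [this, sub_zero]

lemma inv_prod_eq_G (π : Equiv.Perm (Fin p)) :
    (1 - tvar p)⁻¹ * ∏ i : Fin p, (1 - xprod π (i : ℕ) * tvar p)⁻¹ = G π 0 := by
  set U := (1 - tvar p) * ∏ i : Fin p, (1 - xprod π (i : ℕ) * tvar p) with hU
  have hUc : constantCoeff (σ := XYT p) (R := ℚ) U ≠ 0 := by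
    rw [hU, map_mul, const_coeff_t, one_mul, map_prod]
    simp [const_coeff_factor]
  have h1 : G π 0 * U = 1 := by rw [mul_comm]; exact Gtot π
  have h2 : ((1 - tvar p)⁻¹ * ∏ i : Fin p, (1 - xprod π (i : ℕ) * tvar p)⁻¹) * U = 1 := by
    rw [hU]
    calc ((1 - tvar p)⁻¹ * ∏ i : Fin p, (1 - xprod π (i : ℕ) * tvar p)⁻¹) *
          ((1 - tvar p) * ∏ i : Fin p, (1 - xprod π (i : ℕ) * tvar p))
        = ((1 - tvar p)⁻¹ * (1 - tvar p)) *
          ((∏ i : Fin p, (1 - xprod π (i : ℕ) * tvar p)⁻¹) *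
            ∏ i : Fin p, (1 - xprod π (i : ℕ) * tvar p)) := by ring
      _ = ((1 - tvar p)⁻¹ * (1 - tvar p)) *
          ∏ i : Fin p, ((1 - xprod π (i : ℕ) * tvar p)⁻¹ * (1 - xprod π (i : ℕ) * tvar p)) := by
            rw [Finset.prod_mul_distrib]
      _ = 1 := by
          have hc : ∀ i : Fin p, (1 - xprod π (i : ℕ) * tvar p)⁻¹ *
              (1 - xprod π (i : ℕ) * tvar p) = 1 := fun i =>
            MvPowerSeries.inv_mul_cancel _ (by rw [const_coeff_factor]; norm_num)
          rw [MvPowerSeries.inv_mul_cancel _ (by rw [const_coeff_t]; norm_num)]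
          simp [hc]
  have e1 := (MvPowerSeries.eq_inv_iff_mul_eq_one hUc).mpr h1
  have e2 := (MvPowerSeries.eq_inv_iff_mul_eq_one hUc).mpr h2
  rw [e2, ← e1]

end AG
namespace AG
open MvPowerSeries Finset

variable {p : ℕ}

lemma filter_le_succ (S : Finset ℕ) (l : ℕ) :
    S.filter (· ≤ l + 1) =
      if l + 1 ∈ S then insert (l + 1) (S.filter (· ≤ l)) else S.filter (· ≤ l) := by
  split
  · ext i
    simp only [Finset.mem_filter, Finset.mem_insert]
    constructor
    · rintro ⟨h1, h2⟩
      rcases eq_or_lt_of_le h2 with h | h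
      · left; omega
      · right; exact ⟨h1, by omega⟩
    · rintro (rfl | ⟨h1, h2⟩)
      · exact ⟨by assumption, le_refl _⟩
      · exact ⟨h1, by omega⟩
  · ext i
    simp only [Finset.mem_filter]
    constructor
    · rintro ⟨h1, h2⟩
      refine ⟨h1, ?_⟩
      rcases eq_or_lt_of_le h2 with h | h
      · exfalso; subst h; tauto
      · omega
    · rintro ⟨h1, h2⟩; exact ⟨h1, by omega⟩

section Tau

variable (hp : 0 < p) (s : Fin p → ℕ) (π : Equiv.Perm (Fin p)) (r : Fin p → ℕ)

/-- the last element of `Fin p` -/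
def flast : Fin p := ⟨p - 1, Nat.sub_lt hp Nat.one_pos⟩

def bcount (l : ℕ) : ℕ := ((D1 s π r).filter (· ≤ l)).card

lemma not_mem_D1_of_ge {i : ℕ} (hi : p ≤ i) : i ∉ D1 s π r := by
  intro h
  rw [D1, Finset.mem_filter, Finset.mem_Icc] at h
  omega

lemma mem_D1_iff {i : ℕ} : i ∈ D1 s π r ↔ (1 ≤ i ∧ i ≤ p - 1 ∧ IsDesc s π r i) := by
  rw [D1, Finset.mem_filter, Finset.mem_Icc]
  tauto

lemma bcount_zero : bcount s π r 0 = 0 := by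
  rw [bcount, Finset.card_eq_zero, Finset.filter_eq_empty_iff]
  intro i hi
  rw [mem_D1_iff] at hi
  omega

lemma bcount_succ (l : ℕ) (hl : l + 1 < p) :
    bcount s π r (l + 1) = bcount s π r l + (if IsDesc s π r (l + 1) then 1 else 0) := by
  rw [bcount, bcount, filter_le_succ]
  have hmem : (l + 1) ∈ D1 s π r ↔ IsDesc s π r (l + 1) := by
    rw [mem_D1_iff]
    constructor
    · tauto
    · intro h; exact ⟨by omega, by omega, h⟩
  by_cases hd : IsDesc s π r (l + 1)
  · rw [if_pos (hmem.mpr hd), if_pos hd, Finset.card_insert_of_notMem]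
    intro h
    rw [Finset.mem_filter] at h
    omega
  · rw [if_neg (fun h => hd (hmem.mp h)), if_neg hd, add_zero]

lemma bcount_last : bcount s π r (p - 1) = (D1 s π r).card := by
  rw [bcount]
  congr 1
  rw [Finset.filter_eq_self]
  intro i hi
  rw [mem_D1_iff] at hi
  simpa using hi.2.1

lemma bcount_le (l : ℕ) : bcount s π r l ≤ (D1 s π r).card :=
  Finset.card_le_card (Finset.filter_subset _ _)

/-- `ε = 1` iff `r(π_p) ≠ 0`. -/
def eps : ℕ := if r (π (flast hp)) = 0 then 0 else 1

lemma Dfull_card : (Dfull hp s π r).card = (D1 s π r).card + eps hp π r := by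
  rw [Dfull, eps, flast]
  split
  · rw [add_zero]
  · rw [Finset.card_insert_of_notMem (not_mem_D1_of_ge s π r (le_refl p))]

lemma Dfull_filter (a : Fin p) :
    (Dfull hp s π r).filter (· ≤ (a : ℕ)) = (D1 s π r).filter (· ≤ (a : ℕ)) := by
  rw [Dfull]
  split
  · rfl
  · rw [Finset.filter_insert, if_neg (by have := a.isLt; omega)]

/-- the exponent of the numerator monomial of the `τ` term -/
def baseMu : XYT p →₀ ℕ :=
  muY r + (∑ i ∈ Dfull hp s π r, muX π i) + Finsupp.single tv (Dfull hp s π r).card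

lemma baseMu_y (x : Fin p) : baseMu hp s π r (yv x) = r x := by
  rw [baseMu, Finsupp.add_apply, Finsupp.add_apply, Finsupp.finset_sum_apply]
  simp

lemma baseMu_x (a : Fin p) : baseMu hp s π r (xv (π a)) = bcount s π r (a : ℕ) := by
  rw [baseMu, Finsupp.add_apply, Finsupp.add_apply, Finsupp.finset_sum_apply]
  rw [muY_x, single_tv_x, zero_add, add_zero]
  rw [bcount, ← Dfull_filter hp s π r a, Finset.card_filter]
  exact Finset.sum_congr rfl fun i _ => muX_x π i a

lemma baseMu_t : baseMu hp s π r tv = (Dfull hp s π r).card := by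
  rw [baseMu, Finsupp.add_apply, Finsupp.add_apply, Finsupp.finset_sum_apply]
  simp

/-- clean characterization of when the coefficient of the `τ`-term is 1 -/
def Clean (d : XYT p →₀ ℕ) : Prop :=
  (∀ x, d (yv x) = r x) ∧
  (∀ l : Fin p, ∀ h : (l : ℕ) + 1 < p,
     d (xv (π l)) ≤ d (xv (π ⟨(l : ℕ) + 1, h⟩)) ∧
     (IsDesc s π r ((l : ℕ) + 1) → d (xv (π l)) < d (xv (π ⟨(l : ℕ) + 1, h⟩)))) ∧
  d (xv (π (flast hp))) + eps hp π r ≤ d tv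

lemma term_coeff (d : XYT p →₀ ℕ) :
    MvPowerSeries.coeff d
      (yprod r * (∏ i ∈ Dfull hp s π r, xprod π i) * tvar p ^ (Dfull hp s π r).card *
        (1 - tvar p)⁻¹ * ∏ i : Fin p, (1 - xprod π (i : ℕ) * tvar p)⁻¹) =
    if Clean hp s π r d then 1 else 0 := by
  have hterm : yprod r * (∏ i ∈ Dfull hp s π r, xprod π i) *
        tvar p ^ (Dfull hp s π r).card * (1 - tvar p)⁻¹ *
        ∏ i : Fin p, (1 - xprod π (i : ℕ) * tvar p)⁻¹ =
      MvPowerSeries.monomial (R := ℚ) (baseMu hp s π r) 1 * G π 0 := by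
    rw [yprod_eq, tvar_pow]
    rw [Finset.prod_congr rfl fun i _ => xprod_eq π i, prod_monomial]
    rw [mul_assoc, ← inv_prod_eq_G π, baseMu]
    rw [monomial_mul_monomial, monomial_mul_monomial]
    ring_nf
  rw [hterm, coeff_monomial_mul, one_mul]
  have : (if baseMu hp s π r ≤ d then (MvPowerSeries.coeff (d - baseMu hp s π r)) (G π 0)
      else 0) = if (baseMu hp s π r ≤ d ∧ P π 0 (d - baseMu hp s π r)) then 1 else 0 := by
    split
    · rw [coeff_G]
      split
      · rw [if_pos ⟨by assumption, by assumption⟩]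
      · rw [if_neg (by tauto)]
    · rw [if_neg (by tauto)]
  rw [this]
  refine if_congr ?_ rfl rfl
  -- now the combinatorial equivalence
  constructor
  · rintro ⟨hle, hy0, _, hch⟩
    have hle' := Finsupp.le_def.mp hle
    have hy : ∀ x, d (yv x) = r x := by
      intro x
      have h1 := hy0 x
      rw [Finsupp.tsub_apply, baseMu_y] at h1
      have h2 := hle' (yv x)
      rw [baseMu_y] at h2
      omega
    have hblea : ∀ a : Fin p, bcount s π r (a : ℕ) ≤ d (xv (π a)) := by
      intro a
      have := hle' (xv (π a)); rwa [baseMu_x] at this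
    have hcard : (D1 s π r).card + eps hp π r ≤ d tv := by
      have := hle' tv; rwa [baseMu_t, Dfull_card] at this
    refine ⟨hy, ?_, ?_⟩
    · intro l h
      have hc := hch l (by omega)
      rw [chain, dif_pos h, Finsupp.tsub_apply, Finsupp.tsub_apply, baseMu_x, baseMu_x] at hc
      have hsucc : ((⟨(l : ℕ) + 1, h⟩ : Fin p) : ℕ) = (l : ℕ) + 1 := rfl
      rw [hsucc, bcount_succ s π r (l : ℕ) h] at hc
      have h1 := hblea l
      have h2 := hblea ⟨(l : ℕ) + 1, h⟩
      rw [hsucc, bcount_succ s π r (l : ℕ) h] at h2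
      constructor
      · split at hc <;> omega
      · intro hdesc
        rw [if_pos hdesc] at hc h2
        omega
    · have hc := hch (flast hp) (by omega)
      have hlast : ((flast hp : Fin p) : ℕ) + 1 < p ↔ False := by
        rw [flast]; simp; omega
      rw [chain, dif_neg (by rw [flast]; simp; omega), Finsupp.tsub_apply, Finsupp.tsub_apply,
        baseMu_x, baseMu_t, Dfull_card] at hc
      have h1 := hblea (flast hp)
      have h2 : bcount s π r ((flast hp : Fin p) : ℕ) = (D1 s π r).card := by
        rw [flast]; exact bcount_last s π r
      rw [h2] at hc h1
      omega
  · rintro ⟨hy, hch, hlast⟩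
    have hblea : ∀ lv : ℕ, ∀ h : lv < p, bcount s π r lv ≤ d (xv (π ⟨lv, h⟩)) := by
      intro lv
      induction lv with
      | zero => intro h; rw [bcount_zero]; omega
      | succ k ih =>
        intro h
        have hk : k < p := by omega
        have := hch ⟨k, hk⟩ h
        simp only [Fin.val_mk] at this
        rw [bcount_succ s π r k h]
        have hik := ih hk
        split
        · have := this.2 (by assumption)
          omega
        · have := this.1
          omega
    have hblea' : ∀ a : Fin p, bcount s π r (a : ℕ) ≤ d (xv (π a)) := fun a => hblea a a.isLt
    have hcard : (D1 s π r).card + eps hp π r ≤ d tv := by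
      have h1 := hblea' (flast hp)
      have h2 : bcount s π r ((flast hp : Fin p) : ℕ) = (D1 s π r).card := by
        rw [flast]; exact bcount_last s π r
      rw [h2] at h1
      omega
    have hle : baseMu hp s π r ≤ d := by
      rw [Finsupp.le_def]
      intro e
      rcases e with (v | v) | u
      · have hv : Sum.inl (Sum.inl v) = xv v := rfl
        rw [hv]
        have hv2 : v = π (π.symm v) := (Equiv.apply_symm_apply π v).symm
        rw [hv2, baseMu_x]
        exact hblea' _
      · have hv : (Sum.inl (Sum.inr v) : XYT p) = yv v := rfl
        rw [hv, baseMu_y, hy]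
      · have hv : (Sum.inr u : XYT p) = tv := by rw [tv]
        rw [hv, baseMu_t, Dfull_card]
        exact hcard
    refine ⟨hle, ?_, fun l hl => absurd hl (by omega), ?_⟩
    · intro x
      rw [Finsupp.tsub_apply, baseMu_y, hy]
      omega
    · intro l _
      rw [chain]
      by_cases hsucc : (l : ℕ) + 1 < p
      · rw [dif_pos hsucc, Finsupp.tsub_apply, Finsupp.tsub_apply, baseMu_x, baseMu_x]
        have hs : ((⟨(l : ℕ) + 1, hsucc⟩ : Fin p) : ℕ) = (l : ℕ) + 1 := rfl
        rw [hs, bcount_succ s π r (l : ℕ) hsucc]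
        have h1 := hblea' l
        have h2 := hch l hsucc
        split
        · have := h2.2 (by assumption)
          omega
        · have := h2.1
          omega
      · rw [dif_neg hsucc, Finsupp.tsub_apply, Finsupp.tsub_apply, baseMu_x, baseMu_t,
          Dfull_card]
        have hleq : l = flast hp := by
          rw [flast]; exact Fin.ext (by have := l.isLt; simp; omega)
        have h2 : bcount s π r ((l : Fin p) : ℕ) = (D1 s π r).card := by
          rw [hleq, flast]; exact bcount_last s π r
        rw [h2]
        rw [hleq] at *
        omega

end Tau
end AG
namespace AG
open Finset

variable {p : ℕ}

lemma mono_adj {α : Type*} [Preorder α] (f : Fin p → α)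
    (h : ∀ l : Fin p, ∀ hl : (l : ℕ) + 1 < p, f l ≤ f ⟨(l : ℕ) + 1, hl⟩) :
    ∀ a b : Fin p, (a : ℕ) ≤ (b : ℕ) → f a ≤ f b := by
  suffices H : ∀ k, ∀ a b : Fin p, (b : ℕ) = (a : ℕ) + k → f a ≤ f b by
    intro a b hab; exact H ((b : ℕ) - (a : ℕ)) a b (by omega)
  intro k
  induction k with
  | zero => intro a b hb; have : b = a := Fin.ext (by omega); rw [this]
  | succ k ih =>
    intro a b hb
    have hlt : (a : ℕ) + k + 1 < p := by have := b.isLt; omega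
    have h1 := ih a ⟨(a : ℕ) + k, by omega⟩ rfl
    have h2 := h ⟨(a : ℕ) + k, by omega⟩ hlt
    have hbe : b = ⟨(a : ℕ) + k + 1, hlt⟩ := Fin.ext (by simp; omega)
    rw [hbe]
    exact le_trans h1 h2

lemma strictMono_adj {α : Type*} [Preorder α] (f : Fin p → α)
    (h : ∀ l : Fin p, ∀ hl : (l : ℕ) + 1 < p, f l < f ⟨(l : ℕ) + 1, hl⟩) :
    StrictMono f := by
  suffices H : ∀ k, ∀ a b : Fin p, (b : ℕ) = (a : ℕ) + (k + 1) → f a < f b by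
    intro a b hab
    exact H ((b : ℕ) - (a : ℕ) - 1) a b (by have : (a : ℕ) < (b : ℕ) := hab; omega)
  intro k
  induction k with
  | zero =>
    intro a b hb
    have hlt : (a : ℕ) + 1 < p := by have := b.isLt; omega
    have hbe : b = ⟨(a : ℕ) + 1, hlt⟩ := Fin.ext (by simp; omega)
    rw [hbe]; exact h a hlt
  | succ k ih =>
    intro a b hb
    have hlt : (a : ℕ) + (k + 1) + 1 < p := by have := b.isLt; omega
    have h1 := ih a ⟨(a : ℕ) + (k + 1), by omega⟩ rfl
    have h2 := h ⟨(a : ℕ) + (k + 1), by omega⟩ hlt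
    have hbe : b = ⟨(a : ℕ) + (k + 1) + 1, hlt⟩ := Fin.ext (by simp; omega)
    rw [hbe]
    exact lt_trans h1 h2

section Desc

variable (s : Fin p → ℕ) (π : Equiv.Perm (Fin p))

lemma isDesc_iff (hs : ∀ x, 0 < s x) (r : Fin p → ℕ) (l : Fin p) (h : (l : ℕ) + 1 < p) :
    IsDesc s π r ((l : ℕ) + 1) ↔
      ¬((r (π l) : ℚ) / (s (π l) : ℚ) < (r (π ⟨(l : ℕ) + 1, h⟩) : ℚ) / (s (π ⟨(l : ℕ) + 1, h⟩) : ℚ) ∨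
        ((r (π l) : ℚ) / (s (π l) : ℚ) = (r (π ⟨(l : ℕ) + 1, h⟩) : ℚ) / (s (π ⟨(l : ℕ) + 1, h⟩) : ℚ) ∧
          π l < π ⟨(l : ℕ) + 1, h⟩)) := by
  have h1 : ((l : ℕ) + 1) - 1 < p := by omega
  have e1 : (⟨((l : ℕ) + 1) - 1, h1⟩ : Fin p) = l := Fin.ext (by simp)
  have hne : π l ≠ π ⟨(l : ℕ) + 1, h⟩ := by
    intro hc
    have := π.injective hc
    have : (l : ℕ) = (l : ℕ) + 1 := congrArg Fin.val this
    omega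
  constructor
  · rintro ⟨h1', h2', hcase⟩
    have e1' : (⟨((l : ℕ) + 1) - 1, h1'⟩ : Fin p) = l := Fin.ext (by simp)
    have e2' : (⟨(l : ℕ) + 1, h2'⟩ : Fin p) = ⟨(l : ℕ) + 1, h⟩ := rfl
    rw [e1', e2'] at hcase
    rintro (hlt | ⟨heq, hpl⟩)
    · rcases hcase with ⟨_, hgt⟩ | ⟨_, hge⟩ <;> linarith
    · rcases hcase with ⟨_, hgt⟩ | ⟨hpl', _⟩
      · linarith
      · exact absurd hpl (not_lt_of_gt hpl')
  · intro hn
    obtain ⟨hA, hB⟩ := not_or.mp hn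
    refine ⟨h1, h, ?_⟩
    rw [e1]
    rcases lt_trichotomy ((r (π l) : ℚ) / (s (π l) : ℚ))
      ((r (π ⟨(l : ℕ) + 1, h⟩) : ℚ) / (s (π ⟨(l : ℕ) + 1, h⟩) : ℚ)) with hlt | heq | hgt
    · exact absurd hlt hA
    · right
      refine ⟨?_, ge_of_eq heq⟩
      rcases lt_or_gt_of_ne hne with hc | hc
      · exact absurd ⟨heq, hc⟩ hB
      · exact hc
    · rcases lt_or_gt_of_ne hne with hc | hc
      · exact Or.inl ⟨hc, hgt⟩
      · exact Or.inr ⟨hc, le_of_lt hgt⟩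

end Desc
end AG
namespace AG
open Finset

variable {p : ℕ}

/-- the sorting key -/
def κf (s : Fin p → ℕ) (d : XYT p →₀ ℕ) (a : Fin p) : Lex (ℕ × Lex (ℚ × Fin p)) :=
  toLex (d (xv a), toLex ((d (yv a) : ℚ) / (s a : ℚ), a))

lemma κf_inj (s : Fin p → ℕ) (d : XYT p →₀ ℕ) : Function.Injective (κf s d) :=
  fun a b h => congrArg (fun z => (ofLex (ofLex z).2).2) h

lemma κf_lt_iff (s : Fin p → ℕ) (d : XYT p →₀ ℕ) (a b : Fin p) :
    κf s d a < κf s d b ↔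
      d (xv a) < d (xv b) ∨ (d (xv a) = d (xv b) ∧
        ((d (yv a) : ℚ) / (s a : ℚ) < (d (yv b) : ℚ) / (s b : ℚ) ∨
          ((d (yv a) : ℚ) / (s a : ℚ) = (d (yv b) : ℚ) / (s b : ℚ) ∧ a < b))) := by
  rw [κf, κf, Prod.Lex.toLex_lt_toLex, Prod.Lex.toLex_lt_toLex]

lemma adj_iff (s : Fin p → ℕ) (hs : ∀ x, 0 < s x) (d : XYT p →₀ ℕ)
    (π : Equiv.Perm (Fin p)) (r : Fin p → ℕ) (hr : ∀ x, d (yv x) = r x)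
    (l : Fin p) (h : (l : ℕ) + 1 < p) :
    (d (xv (π l)) ≤ d (xv (π ⟨(l : ℕ) + 1, h⟩)) ∧
      (IsDesc s π r ((l : ℕ) + 1) → d (xv (π l)) < d (xv (π ⟨(l : ℕ) + 1, h⟩)))) ↔
    κf s d (π l) < κf s d (π ⟨(l : ℕ) + 1, h⟩) := by
  rw [κf_lt_iff, isDesc_iff s π hs r l h]
  simp only [hr]
  set k1 := d (xv (π l))
  set k2 := d (xv (π ⟨(l : ℕ) + 1, h⟩))
  set Q := ((r (π l) : ℚ) / (s (π l) : ℚ) <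
      (r (π ⟨(l : ℕ) + 1, h⟩) : ℚ) / (s (π ⟨(l : ℕ) + 1, h⟩) : ℚ) ∨
    ((r (π l) : ℚ) / (s (π l) : ℚ) =
      (r (π ⟨(l : ℕ) + 1, h⟩) : ℚ) / (s (π ⟨(l : ℕ) + 1, h⟩) : ℚ) ∧
      π l < π ⟨(l : ℕ) + 1, h⟩))
  constructor
  · rintro ⟨hle, himp⟩
    rcases eq_or_lt_of_le hle with heq | hlt
    · by_cases hQ : Q
      · exact Or.inr ⟨heq, hQ⟩
      · exact absurd (himp hQ) (by omega)
    · exact Or.inl hlt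
  · rintro (hlt | ⟨heq, hQ⟩)
    · exact ⟨le_of_lt hlt, fun _ => hlt⟩
    · exact ⟨le_of_eq heq, fun hdesc => absurd hQ hdesc⟩

lemma LPs_univ (s : Fin p → ℕ) : LPs (antichainOrder p) s = Finset.univ := by
  rw [LPs, Finset.filter_true_of_mem]
  intro τ _
  intro i j hle
  have h1 : τ.1 i = τ.1 j := hle
  exact le_of_eq (τ.1.injective h1)

lemma count (hp : 0 < p) (s : Fin p → ℕ) (hs : ∀ x, 0 < s x) (d : XYT p →₀ ℕ) :
    ∑ τ ∈ LPs (antichainOrder p) s,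
      (if Clean hp s τ.1 (fun x => (τ.2 x : ℕ)) d then (1 : ℚ) else 0) =
    ∏ i : Fin p, (if (d (xv i) = d tv ∧ d (yv i) = 0) ∨
        (d (xv i) < d tv ∧ d (yv i) < s i) then (1 : ℚ) else 0) := by
  rw [LPs_univ]
  by_cases hok : ∀ i : Fin p, (d (xv i) = d tv ∧ d (yv i) = 0) ∨
      (d (xv i) < d tv ∧ d (yv i) < s i)
  · -- RHS = 1, and exactly one τ contributes
    have hRHS : (∏ i : Fin p, (if (d (xv i) = d tv ∧ d (yv i) = 0) ∨
        (d (xv i) < d tv ∧ d (yv i) < s i) then (1 : ℚ) else 0)) = 1 := by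
      rw [Finset.prod_congr rfl fun i _ => if_pos (hok i)]
      simp
    rw [hRHS]
    -- construct the sorting permutation
    have hκinj := κf_inj s d
    set S : Finset (Lex (ℕ × Lex (ℚ × Fin p))) := Finset.univ.image (κf s d) with hS
    have hcard : S.card = p := by
      rw [hS, Finset.card_image_of_injective _ hκinj, Finset.card_univ, Fintype.card_fin]
    have hmemS : ∀ a, κf s d a ∈ S := fun a => Finset.mem_image_of_mem _ (Finset.mem_univ a)
    have hex : ∀ i : Fin p, ∃ a : Fin p, κf s d a = S.orderEmbOfFin hcard i := by
      intro i
      have h1 := Finset.orderEmbOfFin_mem S hcard i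
      have h2 : (S.orderEmbOfFin hcard) i ∈ Finset.univ.image (κf s d) := by
        rw [← hS]; exact h1
      obtain ⟨a, _, ha⟩ := Finset.mem_image.mp h2
      exact ⟨a, ha⟩
    choose g hg using hex
    have hginj : Function.Injective g := by
      intro i j hij
      have : S.orderEmbOfFin hcard i = S.orderEmbOfFin hcard j := by
        rw [← hg, ← hg, hij]
      exact (S.orderEmbOfFin hcard).injective this
    have hgbij := Finite.injective_iff_bijective.mp hginj
    set π₀ : Equiv.Perm (Fin p) := Equiv.ofBijective g hgbij with hπ₀def
    have hπ₀app : ∀ i, κf s d (π₀ i) = S.orderEmbOfFin hcard i := hg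
    have hπ₀mono : StrictMono (κf s d ∘ π₀) := by
      intro a b hab
      have := (S.orderEmbOfFin hcard).strictMono hab
      simpa [Function.comp, hπ₀app] using this
    have huniq : ∀ π : Equiv.Perm (Fin p), StrictMono (κf s d ∘ π) → π = π₀ := by
      intro π hmono
      have h1 : (κf s d ∘ π) = ⇑(S.orderEmbOfFin hcard) :=
        Finset.orderEmbOfFin_unique hcard (fun x => hmemS _) hmono
      apply Equiv.ext
      intro i
      apply hκinj
      have := congrFun h1 i
      rw [Function.comp] at this
      rw [this, hπ₀app]
    have hrrlt : ∀ x, d (yv x) < s x := by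
      intro x
      rcases hok x with ⟨_, h2⟩ | ⟨_, h2⟩
      · rw [h2]; exact hs x
      · exact h2
    set r₀ : ∀ x : Fin p, Fin (s x) := fun x => ⟨d (yv x), hrrlt x⟩ with hr₀def
    set τ₀ : Equiv.Perm (Fin p) × (∀ x : Fin p, Fin (s x)) := (π₀, r₀) with hτ₀def
    have hiff : ∀ τ : Equiv.Perm (Fin p) × (∀ x : Fin p, Fin (s x)),
        Clean hp s τ.1 (fun x => (τ.2 x : ℕ)) d ↔ τ = τ₀ := by
      intro τ
      constructor
      · rintro ⟨hy, hch, hlastc⟩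
        have hr2 : τ.2 = r₀ := funext fun x => Fin.ext (by rw [hr₀def]; exact (hy x).symm)
        have hrfun : (fun x => ((τ.2 x : ℕ))) = fun x => d (yv x) :=
          funext fun x => (hy x).symm
        rw [hrfun] at hch
        have hmono : StrictMono (κf s d ∘ τ.1) :=
          strictMono_adj _ fun l hl =>
            (adj_iff s hs d τ.1 (fun x => d (yv x)) (fun x => rfl) l hl).mp (hch l hl)
        have h1 := huniq τ.1 hmono
        rw [hτ₀def, Prod.ext_iff]
        exact ⟨h1, hr2⟩
      · rintro rfl
        have hrfun : (fun x => ((τ₀.2 x : ℕ))) = fun x => d (yv x) := funext fun x => rfl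
        show Clean hp s π₀ (fun x => ((r₀ x : ℕ))) d
        have hrfun' : (fun x => ((r₀ x : ℕ))) = fun x => d (yv x) := funext fun x => rfl
        rw [hrfun']
        refine ⟨fun x => rfl, ?_, ?_⟩
        · intro l hl
          refine (adj_iff s hs d π₀ (fun x => d (yv x)) (fun x => rfl) l hl).mpr ?_
          exact hπ₀mono (show l < ⟨(l : ℕ) + 1, hl⟩ by rw [Fin.lt_def]; simp)
        · have hkle : d (xv (π₀ (flast hp))) ≤ d tv := by
            rcases hok (π₀ (flast hp)) with ⟨h1, _⟩ | ⟨h1, _⟩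
            · omega
            · omega
          rw [eps]
          split
          · omega
          · rcases hok (π₀ (flast hp)) with ⟨_, h2⟩ | ⟨h1, _⟩
            · tauto
            · omega
    rw [Finset.sum_congr rfl fun τ _ => if_congr (hiff τ) rfl rfl]
    rw [Finset.sum_ite_eq' Finset.univ τ₀ fun _ => (1 : ℚ)]
    simp
  · -- RHS = 0 and no τ contributes
    obtain ⟨i, hi⟩ := not_forall.mp hok
    have hRHS : (∏ j : Fin p, (if (d (xv j) = d tv ∧ d (yv j) = 0) ∨
        (d (xv j) < d tv ∧ d (yv j) < s j) then (1 : ℚ) else 0)) = 0 :=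
      Finset.prod_eq_zero (Finset.mem_univ i) (if_neg hi)
    rw [hRHS]
    refine Finset.sum_eq_zero fun τ _ => ?_
    rw [if_neg]
    rintro ⟨hy, hch, hlastc⟩
    have hrrlt : ∀ x, d (yv x) < s x := fun x => by rw [hy x]; exact (τ.2 x).isLt
    obtain ⟨hi1, hi2⟩ := not_or.mp hi
    have hn_le : d tv ≤ d (xv i) := by
      by_contra hc
      exact hi2 ⟨by omega, hrrlt i⟩
    have hrfun : (fun x => ((τ.2 x : ℕ))) = fun x => d (yv x) :=
      funext fun x => (hy x).symm
    rw [hrfun] at hch hlastc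
    set ν : Fin p → Lex (ℕ × ℚ) := fun m =>
      toLex (d (xv (τ.1 m)), (d (yv (τ.1 m)) : ℚ) / (s (τ.1 m) : ℚ)) with hνdef
    have hνadj : ∀ l : Fin p, ∀ hl : (l : ℕ) + 1 < p, ν l ≤ ν ⟨(l : ℕ) + 1, hl⟩ := by
      intro l hl
      obtain ⟨hle, himp⟩ := hch l hl
      rw [hνdef]
      rcases eq_or_lt_of_le hle with heq | hlt
      · have hndesc : ¬ IsDesc s τ.1 (fun x => d (yv x)) ((l : ℕ) + 1) := by
          intro hdc
          exact absurd (himp hdc) (by omega)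
        have hQ := not_not.mp
          (fun hnq => hndesc ((isDesc_iff s τ.1 hs (fun x => d (yv x)) l hl).mpr hnq))
        refine Prod.Lex.le_iff.mpr (Or.inr ⟨heq, ?_⟩)
        rcases hQ with h | ⟨h, _⟩
        · exact le_of_lt h
        · exact le_of_eq h
      · exact Prod.Lex.le_iff.mpr (Or.inl hlt)
    have hmono := mono_adj ν hνadj (τ.1.symm i) (flast hp)
      (by rw [flast]; have := (τ.1.symm i).isLt; simp; omega)
    rw [hνdef] at hmono
    simp only [Prod.Lex.le_iff, ofLex_toLex] at hmono
    rw [Equiv.apply_symm_apply] at hmono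
    have hlast_le : d (xv (τ.1 (flast hp))) +
        eps hp τ.1 (fun x => d (yv x)) ≤ d tv := hlastc
    rcases hmono with hlt | ⟨heq, hρ⟩
    · omega
    · -- k i = k (last) hence both equal n, eps = 0
      have hke : d (xv i) = d tv := by omega
      have hrri : d (yv i) ≠ 0 := fun h0 => hi1 ⟨hke, h0⟩
      have heps0 : eps hp τ.1 (fun x => d (yv x)) = 0 := by omega
      rw [eps] at heps0
      have hylast : d (yv (τ.1 (flast hp))) = 0 := by
        by_contra hc
        rw [if_neg hc] at heps0
        omega
      rw [hylast] at hρ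
      have hpos : (0 : ℚ) < (d (yv i) : ℚ) / (s i : ℚ) := by
        apply div_pos
        · exact_mod_cast Nat.pos_of_ne_zero hrri
        · exact_mod_cast hs i
      rw [Nat.cast_zero, zero_div] at hρ
      linarith

end AG
namespace AG
open Finset

variable {p : ℕ}

lemma rhs_coeff (s : Fin p → ℕ) (n : ℕ) (e : (Fin p ⊕ Fin p) →₀ ℕ) :
    MvPowerSeries.coeff e
      (∏ i : Fin p,
        ((MvPowerSeries.X (Sum.inl i) : MvPowerSeries (Fin p ⊕ Fin p) ℚ) ^ n +
          (∑ j ∈ Finset.range n,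
              (MvPowerSeries.X (Sum.inl i) : MvPowerSeries (Fin p ⊕ Fin p) ℚ) ^ j) *
            ∑ j ∈ Finset.range (s i),
              (MvPowerSeries.X (Sum.inr i) : MvPowerSeries (Fin p ⊕ Fin p) ℚ) ^ j)) =
    ∏ i : Fin p, (if (e (Sum.inl i) = n ∧ e (Sum.inr i) = 0) ∨
        (e (Sum.inl i) < n ∧ e (Sum.inr i) < s i) then (1 : ℚ) else 0) := by
  classical
  set mm : Fin p → ℕ × ℕ → ((Fin p ⊕ Fin p) →₀ ℕ) := fun i ab =>
    Finsupp.single (Sum.inl i) ab.1 + Finsupp.single (Sum.inr i) ab.2 with hmm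
  set T : Fin p → Finset (ℕ × ℕ) := fun i =>
    insert (n, 0) ((Finset.range n) ×ˢ (Finset.range (s i))) with hT
  have hfac : ∀ i : Fin p,
      ((MvPowerSeries.X (Sum.inl i) : MvPowerSeries (Fin p ⊕ Fin p) ℚ) ^ n +
        (∑ j ∈ Finset.range n,
            (MvPowerSeries.X (Sum.inl i) : MvPowerSeries (Fin p ⊕ Fin p) ℚ) ^ j) *
          ∑ j ∈ Finset.range (s i),
            (MvPowerSeries.X (Sum.inr i) : MvPowerSeries (Fin p ⊕ Fin p) ℚ) ^ j) =
      ∑ ab ∈ T i, MvPowerSeries.monomial (R := ℚ) (mm i ab) 1 := by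
    intro i
    have hnm : (n, 0) ∉ (Finset.range n) ×ˢ (Finset.range (s i)) := by
      rw [Finset.mem_product]
      simp
    rw [hT, Finset.sum_insert hnm]
    congr 1
    · rw [hmm, MvPowerSeries.X_pow_eq]
      simp
    · rw [Finset.sum_product, Finset.sum_mul_sum]
      refine Finset.sum_congr rfl fun a _ => Finset.sum_congr rfl fun b _ => ?_
      rw [MvPowerSeries.X_pow_eq, MvPowerSeries.X_pow_eq, MvPowerSeries.monomial_mul_monomial,
        one_mul, hmm]
  rw [Finset.prod_congr rfl fun i _ => hfac i, Finset.prod_univ_sum]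
  rw [map_sum]
  have hterm : ∀ g : (i : Fin p) → ℕ × ℕ,
      MvPowerSeries.coeff e (∏ i : Fin p, MvPowerSeries.monomial (R := ℚ) (mm i (g i)) 1) =
      if (∀ i : Fin p, g i = (e (Sum.inl i), e (Sum.inr i))) then 1 else 0 := by
    intro g
    rw [prod_monomial, MvPowerSeries.coeff_monomial]
    have hcoord1 : ∀ a : Fin p, (∑ i : Fin p, mm i (g i)) (Sum.inl a) = (g a).1 := by
      intro a
      rw [Finsupp.finset_sum_apply, Finset.sum_eq_single a]
      · rw [hmm, Finsupp.add_apply, Finsupp.single_apply, Finsupp.single_apply]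
        simp
      · intro b _ hb
        rw [hmm, Finsupp.add_apply, Finsupp.single_apply, Finsupp.single_apply]
        simp [Sum.inl.injEq, hb]
      · simp
    have hcoord2 : ∀ a : Fin p, (∑ i : Fin p, mm i (g i)) (Sum.inr a) = (g a).2 := by
      intro a
      rw [Finsupp.finset_sum_apply, Finset.sum_eq_single a]
      · rw [hmm, Finsupp.add_apply, Finsupp.single_apply, Finsupp.single_apply]
        simp
      · intro b _ hb
        rw [hmm, Finsupp.add_apply, Finsupp.single_apply, Finsupp.single_apply]
        simp [hb]
      · simp
    refine if_congr ?_ rfl rfl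
    constructor
    · intro h i
      have h1 := hcoord1 i
      have h2 := hcoord2 i
      rw [← h] at h1 h2
      exact Prod.ext h1.symm h2.symm
    · intro h
      ext v
      rcases v with a | a
      · rw [hcoord1 a, h a]
      · rw [hcoord2 a, h a]
  rw [Finset.sum_congr rfl fun g _ => hterm g]
  have hsum : (∑ g ∈ Fintype.piFinset T,
      if (∀ i : Fin p, g i = (e (Sum.inl i), e (Sum.inr i))) then (1 : ℚ) else 0) =
      if (fun i => (e (Sum.inl i), e (Sum.inr i))) ∈ Fintype.piFinset T then (1 : ℚ) else 0 := by
    rw [Finset.sum_congr rfl fun g _ => if_congr funext_iff.symm rfl rfl]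
    exact Finset.sum_ite_eq' _ _ _
  rw [hsum]
  have hmem : (fun i => (e (Sum.inl i), e (Sum.inr i))) ∈ Fintype.piFinset T ↔
      ∀ i : Fin p, (e (Sum.inl i) = n ∧ e (Sum.inr i) = 0) ∨
        (e (Sum.inl i) < n ∧ e (Sum.inr i) < s i) := by
    rw [Fintype.mem_piFinset]
    refine forall_congr' fun i => ?_
    rw [hT, Finset.mem_insert, Finset.mem_product, Finset.mem_range, Finset.mem_range,
      Prod.mk.injEq]
  by_cases hall : ∀ i : Fin p, (e (Sum.inl i) = n ∧ e (Sum.inr i) = 0) ∨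
      (e (Sum.inl i) < n ∧ e (Sum.inr i) < s i)
  · rw [if_pos (hmem.mpr hall), Finset.prod_congr rfl fun i _ => if_pos (hall i)]
    simp
  · rw [if_neg (fun h => hall (hmem.mp h))]
    obtain ⟨i, hi⟩ := not_forall.mp hall
    refine (Finset.prod_eq_zero (Finset.mem_univ i) ?_).symm
    exact if_neg hi

end AG
/-- For the anti-chain `P` on `[p]`:
`∑_{n ≥ 0} (∏_{i=1}^p (x_i^n + [n]_{x_i} [s(i)]_{y_i})) t^n
 = ∑_{τ=(π,r) ∈ L(P,s)} y^r ∏_{i ∈ D(τ)} x_{π_{i+1}} ⋯ x_{π_p} · t^{|D(τ)|}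
   / ((1-t) ∏_{i ∈ [p]} (1 - x_{π_i} ⋯ x_{π_p} t))`,
where `L(P,s)` consists of all pairs `(π, r)`. Both sides are compared coefficientwise:
at a monomial `d` (with `n = d(t)`), the left-hand side contributes the coefficient of the
restriction of `d` to the `x,y`-variables in `∏_{i=1}^p (x_i^n + [n]_{x_i} [s(i)]_{y_i})`. -/
theorem antichain_generating_function {p : ℕ} (hp : 0 < p)
    (s : Fin p → ℕ) (hs : ∀ x, 0 < s x) :
    ∀ d : XYT p →₀ ℕ,
      MvPowerSeries.coeff d
          (∑ τ ∈ LPs (antichainOrder p) s,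
            yprod (fun x => (τ.2 x : ℕ)) *
              (∏ i ∈ Dfull hp s τ.1 fun x => (τ.2 x : ℕ), xprod τ.1 i) *
              tvar p ^ (Dfull hp s τ.1 fun x => (τ.2 x : ℕ)).card *
              (1 - tvar p)⁻¹ *
              ∏ i : Fin p, (1 - xprod τ.1 (i : ℕ) * tvar p)⁻¹) =
        MvPowerSeries.coeff
          (Finsupp.equivFunOnFinite.symm fun v : Fin p ⊕ Fin p => d (Sum.inl v))
          (∏ i : Fin p,
            ((MvPowerSeries.X (Sum.inl i) : MvPowerSeries (Fin p ⊕ Fin p) ℚ) ^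
                d (Sum.inr ()) +
              (∑ j ∈ Finset.range (d (Sum.inr ())),
                  (MvPowerSeries.X (Sum.inl i) : MvPowerSeries (Fin p ⊕ Fin p) ℚ) ^ j) *
                ∑ j ∈ Finset.range (s i),
                  (MvPowerSeries.X (Sum.inr i) : MvPowerSeries (Fin p ⊕ Fin p) ℚ) ^ j)) := by
  intro d
  rw [map_sum]
  rw [Finset.sum_congr rfl fun τ _ => AG.term_coeff hp s τ.1 (fun x => ((τ.2 x : ℕ))) d]
  rw [AG.count hp s hs d]
  rw [AG.rhs_coeff s (d (Sum.inr ())) (Finsupp.equivFunOnFinite.symm fun v : Fin p ⊕ Fin p => d (Sum.inl v))]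
  refine Finset.prod_congr rfl fun i _ => ?_
  exact if_congr (by simp [AG.xv, AG.yv, AG.tv]) rfl rfl
end
end
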